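/- arXiv:2506.23790 — 8 statements merged into one kernel-verified Lean document; each statement's English description precedes it below -/
import Mathlib

section
/- A w×h rectangular grid graph with w,h ≥ 2 has a Hamiltonian cycle if and only if w·h is even. -/
/-- A Hamiltonian cycle of `G`, given as the list of vertices in cyclic order:
a Hamiltonian path of length at least `3` whose two endpoints are adjacent. -/
def IsHamCycle {V : Type*} (G : SimpleGraph V) (l : List V) : Prop :=
  l.Nodup ∧ (∀ v, v ∈ l) ∧ l.Chain' G.Adj ∧ 3 ≤ l.length ∧
    ∀ (h : l ≠ []), G.Adj (l.head h) (l.getLast h)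

/-- The `w × h` rectangular grid graph. -/
def gridGraph (w h : ℕ) : SimpleGraph (Fin w × Fin h) :=
  SimpleGraph.fromRel (fun a b =>
    (a.1 = b.1 ∧ (a.2 : ℕ) + 1 = (b.2 : ℕ)) ∨ (a.2 = b.2 ∧ (a.1 : ℕ) + 1 = (b.1 : ℕ)))

namespace GridHam

/-- Adjacency of natural-number coordinates. -/
def adjN (p q : ℕ × ℕ) : Prop :=
  (p.1 = q.1 ∧ (p.2 + 1 = q.2 ∨ q.2 + 1 = p.2)) ∨
  (p.2 = q.2 ∧ (p.1 + 1 = q.1 ∨ q.1 + 1 = p.1))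

lemma adj_of_adjN {w h : ℕ} {a b : Fin w × Fin h}
    (hab : adjN (a.1.val, a.2.val) (b.1.val, b.2.val)) :
    (gridGraph w h).Adj a b := by
  have hne : a ≠ b := by
    rintro rfl
    simp only [adjN] at hab
    omega
  rw [gridGraph, SimpleGraph.fromRel_adj]
  refine ⟨hne, ?_⟩
  obtain ⟨h1, h2 | h2⟩ | ⟨h1, h2 | h2⟩ := hab
  · exact Or.inl (Or.inl ⟨Fin.ext h1, h2⟩)
  · exact Or.inr (Or.inl ⟨Fin.ext h1.symm, h2⟩)
  · exact Or.inl (Or.inr ⟨Fin.ext h1, h2⟩)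
  · exact Or.inr (Or.inr ⟨Fin.ext h1.symm, h2⟩)

def posY (h x r : ℕ) : ℕ := if x % 2 = 1 then h - 1 - r else r + 1

/-- Position `i` on the boustrophedon Hamiltonian cycle of the `w × h` grid (w even). -/
def pos (w h i : ℕ) : ℕ × ℕ :=
  if i < h then (0, i)
  else if i < h + (w-1)*(h-1) then
    ((i - h) / (h-1) + 1, posY h ((i - h) / (h-1) + 1) ((i - h) % (h-1)))
  else (w - 1 - (i - (h + (w-1)*(h-1))), 0)

lemma divmod {d : ℕ} (a q r : ℕ) (ha : a = d * q + r) (hr : r < d) :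
    a / d = q ∧ a % d = r := by
  subst ha
  rw [Nat.mul_add_div (by omega), Nat.mul_add_mod, Nat.div_eq_of_lt hr, Nat.mod_eq_of_lt hr]
  omega

lemma arithF1 {w h : ℕ} (hw : 2 ≤ w) (hh : 2 ≤ h) : h + (w-1)*(h-1) + (w-1) = w*h := by
  obtain ⟨a, rfl⟩ : ∃ a, w = a + 2 := ⟨w - 2, by omega⟩
  obtain ⟨b, rfl⟩ : ∃ b, h = b + 2 := ⟨h - 2, by omega⟩
  simp only [show ∀ n:ℕ, n+2-1 = n+1 from fun n => rfl]
  ring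

lemma arithF2 {w h : ℕ} (hw : 2 ≤ w) (hh : 2 ≤ h) : (h-1)*(w-2) + (h-1) = (w-1)*(h-1) := by
  obtain ⟨a, rfl⟩ : ∃ a, w = a + 2 := ⟨w - 2, by omega⟩
  obtain ⟨b, rfl⟩ : ∃ b, h = b + 2 := ⟨h - 2, by omega⟩
  simp only [show ∀ n:ℕ, n+2-1 = n+1 from fun n => rfl,
    show ∀ n:ℕ, n+2-2 = n from fun n => rfl]
  ring

lemma arithF3 {w h : ℕ} (hw : 2 ≤ w) (hh : 2 ≤ h) : 0 < (w-1)*(h-1) :=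
  Nat.mul_pos (by omega) (by omega)

lemma pos_seg1 {w h i : ℕ} (hi : i < h) : pos w h i = (0, i) := by
  simp [pos, hi]

lemma pos_seg2 {w h i : ℕ} (hh : 2 ≤ h) (q r : ℕ) (h1 : h ≤ i) (h2 : i < h + (w-1)*(h-1))
    (hqr : i - h = (h-1) * q + r) (hr : r < h-1) :
    pos w h i = (q + 1, posY h (q+1) r) := by
  obtain ⟨hd, hm⟩ := divmod (i - h) q r hqr hr
  simp only [pos, if_neg (show ¬ i < h by omega), if_pos h2, hd, hm]

lemma pos_seg3 {w h i : ℕ} (h1 : h + (w-1)*(h-1) ≤ i) :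
    pos w h i = (w - 1 - (i - (h + (w-1)*(h-1))), 0) := by
  simp only [pos, if_neg (show ¬ i < h by omega),
    if_neg (show ¬ i < h + (w-1)*(h-1) by omega)]

lemma pos_lt {w h i : ℕ} (hw : 2 ≤ w) (hh : 2 ≤ h) (hi : i < w * h) :
    (pos w h i).1 < w ∧ (pos w h i).2 < h := by
  have F1 := arithF1 hw hh
  by_cases c1 : i < h
  · rw [pos_seg1 c1]; constructor <;> simp <;> omega
  · by_cases c2 : i < h + (w-1)*(h-1)
    · set q := (i - h) / (h-1) with hq
      set r := (i - h) % (h-1) with hr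
      have hrlt : r < h - 1 := Nat.mod_lt _ (by omega)
      have hrep : i - h = (h-1)*q + r := (Nat.div_add_mod _ _).symm
      rw [pos_seg2 hh q r (by omega) c2 hrep hrlt]
      have hqlt : q < w - 1 := by
        rw [hq, Nat.div_lt_iff_lt_mul (show 0 < h - 1 by omega)]
        omega
      constructor
      · simp; omega
      · simp only [posY]
        split_ifs <;> omega
    · rw [pos_seg3 (by omega)]
      constructor <;> omega

lemma pos_adjN {w h i : ℕ} (hw : 2 ≤ w) (hh : 2 ≤ h) (hw2 : w % 2 = 0)
    (hi : i + 1 < w * h) : adjN (pos w h i) (pos w h (i+1)) := by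
  have F1 := arithF1 hw hh
  have F2 := arithF2 hw hh
  have F3 := arithF3 hw hh
  by_cases c1 : i + 1 < h
  · rw [pos_seg1 (by omega), pos_seg1 c1]
    simp [adjN]
  · by_cases c1' : i + 1 = h
    · rw [pos_seg1 (show i < h by omega),
        pos_seg2 hh 0 0 (by omega) (by omega) (by omega) (by omega)]
      simp only [adjN, posY]
      split_ifs <;> simp <;> omega
    · by_cases c2 : i + 1 < h + (w-1)*(h-1)
      · set q := (i - h) / (h-1) with hq
        set r := (i - h) % (h-1) with hr
        have hrlt : r < h - 1 := Nat.mod_lt _ (by omega)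
        have hrep : i - h = (h-1)*q + r := (Nat.div_add_mod _ _).symm
        rw [pos_seg2 hh q r (by omega) (by omega) hrep hrlt]
        by_cases c3 : r + 1 < h - 1
        · rw [pos_seg2 hh q (r+1) (by omega) c2 (by omega) c3]
          simp only [adjN, posY]
          split_ifs <;> simp <;> omega
        · have hmul : (h-1)*(q+1) = (h-1)*q + (h-1) := by ring
          rw [pos_seg2 hh (q+1) 0 (by omega) c2 (by omega) (by omega)]
          simp only [adjN, posY]
          split_ifs <;> simp <;> omega
      · by_cases c2' : i + 1 = h + (w-1)*(h-1)
        · rw [pos_seg2 hh (w-2) (h-2) (by omega) (by omega) (by omega) (by omega),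
            pos_seg3 (by omega)]
          simp only [adjN, posY]
          split_ifs <;> simp <;> omega
        · rw [pos_seg3 (by omega), pos_seg3 (by omega)]
          simp only [adjN]
          simp
          omega

lemma pos_surj {w h : ℕ} (hw : 2 ≤ w) (hh : 2 ≤ h) (x y : ℕ) (hx : x < w) (hy : y < h) :
    ∃ i, i < w * h ∧ pos w h i = (x, y) := by
  have F1 := arithF1 hw hh
  have F2 := arithF2 hw hh
  have F3 := arithF3 hw hh
  rcases Nat.eq_zero_or_pos x with rfl | hx1
  · exact ⟨y, by omega, pos_seg1 hy⟩
  · rcases Nat.eq_zero_or_pos y with rfl | hy1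
    · refine ⟨h + (w-1)*(h-1) + (w - 1 - x), by omega, ?_⟩
      rw [pos_seg3 (by omega), Prod.mk.injEq]
      exact ⟨by omega, rfl⟩
    · have hb : (h-1)*(x-1) + (h-1) ≤ (w-1)*(h-1) := by
        have hmle : (h-1)*(x-1) ≤ (h-1)*(w-2) := Nat.mul_le_mul_left _ (by omega)
        omega
      by_cases hx2 : x % 2 = 1
      · refine ⟨h + ((h-1)*(x-1) + (h - 1 - y)), by omega, ?_⟩
        rw [pos_seg2 hh (x-1) (h-1-y) (by omega) (by omega) (by omega) (by omega)]
        simp only [posY, Prod.mk.injEq]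
        split_ifs <;> omega
      · refine ⟨h + ((h-1)*(x-1) + (y - 1)), by omega, ?_⟩
        rw [pos_seg2 hh (x-1) (y-1) (by omega) (by omega) (by omega) (by omega)]
        simp only [posY, Prod.mk.injEq]
        split_ifs <;> omega

lemma ham_of_even_w (w h : ℕ) (hw : 2 ≤ w) (hh : 2 ≤ h) (hw2 : w % 2 = 0) :
    ∃ l, IsHamCycle (gridGraph w h) l := by
  have F1 := arithF1 hw hh
  have F3 := arithF3 hw hh
  have hw0 : 0 < w := by omega
  have hh0 : 0 < h := by omega
  set e : ℕ → Fin w × Fin h := fun i =>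
    (⟨(pos w h i).1 % w, Nat.mod_lt _ hw0⟩, ⟨(pos w h i).2 % h, Nat.mod_lt _ hh0⟩) with he
  have hval : ∀ i, i < w*h → ((e i).1.val = (pos w h i).1 ∧ (e i).2.val = (pos w h i).2) := by
    intro i hi
    obtain ⟨h1, h2⟩ := pos_lt hw hh hi
    simp [he, Nat.mod_eq_of_lt h1, Nat.mod_eq_of_lt h2]
  have hN4 : 4 ≤ w * h := le_trans (by norm_num) (Nat.mul_le_mul hw hh)
  have hsurj : ∀ v : Fin w × Fin h, ∃ i < w*h, e i = v := by
    intro v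
    obtain ⟨i, hi, hp⟩ := pos_surj hw hh v.1.val v.2.val v.1.isLt v.2.isLt
    refine ⟨i, hi, ?_⟩
    obtain ⟨h1, h2⟩ := hval i hi
    rw [hp] at h1 h2
    exact Prod.ext (Fin.ext (by simpa using h1)) (Fin.ext (by simpa using h2))
  have hinj : ∀ i, i < w*h → ∀ j, j < w*h → e i = e j → i = j := by
    have hsurj' : Function.Surjective (fun i : Fin (w*h) => e i.val) := by
      intro v; obtain ⟨i, hi, hei⟩ := hsurj v; exact ⟨⟨i, hi⟩, hei⟩
    have hbij : Function.Bijective (fun i : Fin (w*h) => e i.val) := by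
      rw [Fintype.bijective_iff_surjective_and_card]
      exact ⟨hsurj', by simp⟩
    intro i hi j hj hij
    have := hbij.injective (a₁ := ⟨i, hi⟩) (a₂ := ⟨j, hj⟩) hij
    exact congrArg Fin.val this
  refine ⟨(List.range (w*h)).map e, ?_, ?_, ?_, ?_, ?_⟩
  · refine List.Nodup.map_on ?_ List.nodup_range
    intro a ha b hb hab
    exact hinj a (by simpa using ha) b (by simpa using hb) hab
  · intro v
    obtain ⟨i, hi, hei⟩ := hsurj v
    exact List.mem_map.mpr ⟨i, List.mem_range.mpr hi, hei⟩
  · rw [List.Chain', List.isChain_map]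
    obtain ⟨n, hn⟩ : ∃ n, w*h = n + 1 := ⟨w*h - 1, by omega⟩
    rw [hn, List.isChain_range_succ]
    intro m hm
    apply adj_of_adjN
    have hm1 : m + 1 < w*h := by omega
    obtain ⟨e1, e2⟩ := hval m (by omega)
    obtain ⟨e3, e4⟩ := hval (m+1) hm1
    have h3 := pos_adjN hw hh hw2 hm1
    simp only [adjN, Nat.succ_eq_add_one] at h3 ⊢
    simp only [he] at e1 e2 e3 e4 ⊢
    omega
  · rw [List.length_map, List.length_range]; omega
  · intro hne
    rw [List.head_eq_getElem, List.getLast_eq_getElem]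
    apply adj_of_adjN
    obtain ⟨e1, e2⟩ := hval 0 (by omega)
    obtain ⟨e3, e4⟩ := hval (w*h - 1) (by omega)
    have p0 : pos w h 0 = (0, 0) := pos_seg1 (by omega)
    have plast : pos w h (w*h - 1) = (1, 0) := by
      rw [pos_seg3 (by omega), Prod.mk.injEq]
      exact ⟨by omega, rfl⟩
    rw [p0] at e1 e2
    rw [plast] at e3 e4
    simp only [adjN, List.getElem_map, List.getElem_range, List.length_map,
      List.length_range]
    simp at e1 e2 e3 e4
    omega

lemma adj_swap {w h : ℕ} {a b : Fin w × Fin h} (hab : (gridGraph w h).Adj a b) :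
    (gridGraph h w).Adj a.swap b.swap := by
  rw [gridGraph, SimpleGraph.fromRel_adj] at hab ⊢
  obtain ⟨hne, hr⟩ := hab
  refine ⟨fun hc => hne (Prod.swap_injective hc), ?_⟩
  simp only [Prod.fst_swap, Prod.snd_swap]
  tauto

lemma ham_transpose {w h : ℕ} (hl : ∃ l, IsHamCycle (gridGraph w h) l) :
    ∃ l, IsHamCycle (gridGraph h w) l := by
  obtain ⟨l, h1, h2, h3, h4, h5⟩ := hl
  refine ⟨l.map Prod.swap, ?_, ?_, ?_, ?_, ?_⟩
  · exact h1.map Prod.swap_injective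
  · intro v; exact List.mem_map.mpr ⟨v.swap, h2 _, Prod.swap_swap _⟩
  · rw [List.Chain', List.isChain_map]
    exact h3.imp (fun a b hab => adj_swap hab)
  · simpa using h4
  · intro hne
    have hne' : l ≠ [] := by simpa using hne
    have hadj := adj_swap (h5 hne')
    rw [List.head_eq_getElem, List.getLast_eq_getElem] at hadj ⊢
    simpa [List.getElem_map] using hadj

lemma alt_last : ∀ (t : List (ZMod 2)) (a : ZMod 2), (a::t).Chain' (· ≠ ·) →
    (a::t).getLast (by simp) = a + (t.length : ℕ)
  | [], a, _ => by simp
  | b :: t', a, hc => by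
      rw [List.Chain', List.isChain_cons_cons] at hc
      have ih := alt_last t' b hc.2
      rw [List.getLast_cons (by simp : (b :: t') ≠ []), ih]
      have hb : b = a + 1 := by
        have key : ∀ x y : ZMod 2, x ≠ y → y = x + 1 := by decide
        exact key _ _ hc.1
      rw [hb]
      push_cast [List.length_cons]
      ring

lemma even_of_ham {w h : ℕ} (hw : 2 ≤ w) (hh : 2 ≤ h)
    (hl : ∃ l, IsHamCycle (gridGraph w h) l) : Even (w * h) := by
  obtain ⟨l, h1, h2, h3, h4, h5⟩ := hl
  have hlen : l.length = w * h := by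
    have huniv : l.toFinset = Finset.univ :=
      Finset.eq_univ_iff_forall.mpr (fun v => List.mem_toFinset.mpr (h2 v))
    have hcard := congrArg Finset.card huniv
    rw [List.toFinset_card_of_nodup h1] at hcard
    simpa using hcard
  have hne : l ≠ [] := by intro h0; rw [h0] at h4; simp at h4
  set c : Fin w × Fin h → ZMod 2 := fun v => ((v.1.val + v.2.val : ℕ) : ZMod 2) with hc
  have hadj : ∀ a b : Fin w × Fin h, (gridGraph w h).Adj a b → c a ≠ c b := by
    intro a b hab
    rw [gridGraph, SimpleGraph.fromRel_adj] at hab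
    obtain ⟨-, hr⟩ := hab
    have hne2 : ∀ m n : ℕ, m + 1 = n → ((m : ZMod 2) ≠ (n : ZMod 2)) := by
      intro m n hmn
      subst hmn
      push_cast
      intro hcon
      exact (by decide : ∀ u : ZMod 2, ¬ u = u + 1) _ hcon
    have hsum : a.1.val + a.2.val + 1 = b.1.val + b.2.val ∨
        b.1.val + b.2.val + 1 = a.1.val + a.2.val := by
      rcases hr with (⟨e1, e2⟩ | ⟨e1, e2⟩) | (⟨e1, e2⟩ | ⟨e1, e2⟩) <;>
        [left; left; right; right] <;>
        · first
          | (have := congrArg Fin.val e1; omega)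
    rcases hsum with hs | hs
    · exact hne2 _ _ hs
    · exact (hne2 _ _ hs).symm
  have hchain : (l.map c).Chain' (· ≠ ·) := by
    rw [List.Chain', List.isChain_map]
    exact h3.imp hadj
  obtain ⟨a, t, rfl⟩ := List.exists_cons_of_ne_nil hne
  have hlast := alt_last (t.map c) (c a) (by simpa using hchain)
  have hgl := List.getLast_map (f := c) (l := a :: t) (by simp)
  have hkey : c ((a :: t).getLast hne) = c a + ((t.map c).length : ℕ) := by
    rw [← hgl]
    simp only [List.map_cons]
    rw [hlast]
  have hcadj := hadj _ _ (h5 hne)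
  have hhead : (a :: t).head hne = a := rfl
  rw [hhead] at hcadj
  have htne : ((t.length : ℕ) : ZMod 2) ≠ 0 := by
    intro h0
    apply hcadj
    rw [hkey, List.length_map, h0, add_zero]
  have hdvd : ¬ (2 ∣ t.length) := by
    intro hd
    exact htne ((ZMod.natCast_eq_zero_iff _ _).mpr hd)
  have hlen' : (a :: t).length = w * h := hlen
  rw [Nat.even_iff]
  simp only [List.length_cons] at hlen'
  omega

end GridHam

theorem statement_2 (w h : ℕ) (hw : 2 ≤ w) (hh : 2 ≤ h) :
    (∃ l : List (Fin w × Fin h), IsHamCycle (gridGraph w h) l) ↔ Even (w * h) := by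
  constructor
  · exact GridHam.even_of_ham hw hh
  · intro hev
    rcases Nat.even_mul.mp hev with hwE | hhE
    · exact GridHam.ham_of_even_w w h hw hh (Nat.even_iff.mp hwE)
    · exact GridHam.ham_transpose (GridHam.ham_of_even_w h w hh hw (Nat.even_iff.mp hhE))
end

section
/- A connected proper interval graph has a Hamiltonian path; more precisely, if G has a proper interval ordering (v_1,…,v_n) and G is connected, then (v_1,…,v_n) is itself a Hamiltonian path of G. -/
/-- An ordered Hamiltonian path of `G`, given as the list of its vertices. -/
def IsHamPath {V : Type*} (G : SimpleGraph V) (l : List V) : Prop :=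
  l.Nodup ∧ (∀ v, v ∈ l) ∧ l.Chain' G.Adj

/-- `l` is a proper interval ordering of the vertices of `G`: it lists every
vertex exactly once, and for every edge `v_i v_k` with `i < k` and every `j`
strictly between `i` and `k`, both `v_i v_j` and `v_j v_k` are edges. -/
def IsProperIntervalOrdering {V : Type*} (G : SimpleGraph V) (l : List V) : Prop :=
  l.Nodup ∧ (∀ v, v ∈ l) ∧
    ∀ i j k : Fin l.length, i < j → j < k → G.Adj (l.get i) (l.get k) →
      G.Adj (l.get i) (l.get j) ∧ G.Adj (l.get j) (l.get k)

/-- A connected proper interval graph has a Hamiltonian path; indeed any proper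
interval ordering is itself a Hamiltonian path. -/
theorem statement_7 {V : Type*} (G : SimpleGraph V) (l : List V)
    (hl : IsProperIntervalOrdering G l) (hconn : G.Connected) :
    IsHamPath G l := by
  obtain ⟨hnd, hall, hprop⟩ := hl
  refine ⟨hnd, hall, ?_⟩
  rw [show List.Chain' G.Adj l ↔ _ from List.isChain_iff_getElem]
  intro i hi
  have hi1 : i + 1 < l.length := by omega
  have hii : i < l.length := by omega
  -- any edge crossing the cut between positions ≤ i and positions ≥ i+1 forces
  -- the consecutive pair to be adjacent
  have key : ∀ a b : Fin l.length, (a : ℕ) ≤ i → i + 1 ≤ (b : ℕ) →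
      G.Adj (l.get a) (l.get b) → G.Adj (l.get ⟨i, hii⟩) (l.get ⟨i + 1, hi1⟩) := by
    intro a b ha hb hadj
    have h1 : G.Adj (l.get ⟨i, hii⟩) (l.get b) := by
      rcases eq_or_lt_of_le ha with h | h
      · have : a = ⟨i, hii⟩ := Fin.ext h
        rwa [this] at hadj
      · exact (hprop a ⟨i, hii⟩ b (by simpa [Fin.lt_def] using h)
          (by simp [Fin.lt_def]; omega) hadj).2
    rcases eq_or_lt_of_le hb with h | h
    · have : b = ⟨i + 1, hi1⟩ := Fin.ext h.symm
      rwa [this] at h1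
    · exact (hprop ⟨i, hii⟩ ⟨i + 1, hi1⟩ b (by simp [Fin.lt_def])
        (by simpa [Fin.lt_def] using h) h1).1
  -- the cut
  set S : Set V := {v | ∃ a : Fin l.length, (a : ℕ) ≤ i ∧ l.get a = v} with hS
  have huS : l.get ⟨i, hii⟩ ∈ S := ⟨⟨i, hii⟩, le_refl _, rfl⟩
  have hvS : l.get ⟨i + 1, hi1⟩ ∉ S := by
    rintro ⟨a, ha, hget⟩
    have : a = ⟨i + 1, hi1⟩ := (List.Nodup.get_inj_iff hnd).mp hget
    rw [this] at ha
    simp at ha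
  obtain ⟨p⟩ := hconn.preconnected (l.get ⟨i, hii⟩) (l.get ⟨i + 1, hi1⟩)
  obtain ⟨d, _, hdS, hdS'⟩ := p.exists_boundary_dart S huS hvS
  obtain ⟨a, ha, hga⟩ := hdS
  obtain ⟨b, hgb⟩ := List.mem_iff_get.mp (hall d.snd)
  have hb : i + 1 ≤ (b : ℕ) := by
    by_contra h
    exact hdS' ⟨b, by omega, hgb⟩
  exact key a b ha hb (by rw [hga, hgb]; exact d.adj)
end

section
/- The bandwidth of a proper interval graph equals its clique number minus 1. -/
lemma interval_clique {V : Type*} (G : SimpleGraph V) (l : List V)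
    (hprop : ∀ i j k : Fin l.length, i < j → j < k → G.Adj (l.get i) (l.get k) →
      G.Adj (l.get i) (l.get j) ∧ G.Adj (l.get j) (l.get k))
    (i k : Fin l.length) (hadj : G.Adj (l.get i) (l.get k)) :
    ∀ j j' : Fin l.length, i ≤ j → j < j' → j' ≤ k → G.Adj (l.get j) (l.get j') := by
  intro j j' hij hjj' hj'k
  have hij' : i < j' := lt_of_le_of_lt hij hjj'
  have h1 : G.Adj (l.get i) (l.get j') := by
    rcases eq_or_lt_of_le hj'k with h | h
    · rwa [show j' = k from Fin.ext (by exact_mod_cast congrArg Fin.val h)]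
    · exact (hprop i j' k hij' h hadj).1
  rcases eq_or_lt_of_le hij with h | h
  · rwa [show i = j from h] at h1
  · exact (hprop i j j' h hjj' h1).2

/-- The bandwidth of a (nonempty) proper interval graph equals its clique number
minus one: if `b` is the smallest `k` admitting a layout with all edges of
stretch at most `k`, and `ω` is the largest size of a clique, then `b + 1 = ω`. -/
theorem statement_9 {V : Type*} [Fintype V] [DecidableEq V] [Nonempty V]
    (G : SimpleGraph V) (hpi : ∃ l, IsProperIntervalOrdering G l) (b ω : ℕ)
    (hb : IsLeast {k : ℕ | ∃ σ : V ≃ Fin (Fintype.card V),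
      ∀ u v, G.Adj u v → |((σ u : ℕ) : ℤ) - ((σ v : ℕ) : ℤ)| ≤ (k : ℤ)} b)
    (hω : IsGreatest {n : ℕ | ∃ s : Finset V, G.IsClique ↑s ∧ s.card = n} ω) :
    b + 1 = ω := by
  obtain ⟨l, hnd, hmem, hprop⟩ := hpi
  have hω1 : 1 ≤ ω := by
    refine hω.2 ?_
    obtain ⟨v⟩ := ‹Nonempty V›
    exact ⟨{v}, by simp [SimpleGraph.IsClique], by simp⟩
  -- upper bound : b ≤ ω - 1
  have hble : b ≤ ω - 1 := by
    refine hb.2 ?_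
    set e : Fin l.length ≃ V := hnd.getEquivOfForallMemList l hmem with he
    have hcard : l.length = Fintype.card V := by
      rw [← Fintype.card_fin l.length]; exact Fintype.card_congr e
    refine ⟨e.symm.trans (finCongr hcard), ?_⟩
    intro u v huv
    simp only [Equiv.trans_apply, finCongr_apply, Fin.coe_cast]
    -- key: for indices i < k with an edge, k - i ≤ ω - 1
    have key : ∀ i k : Fin l.length, i < k → G.Adj (l.get i) (l.get k) →
        (k : ℕ) - i ≤ ω - 1 := by
      intro i k hik hadj
      have hcl : G.IsClique ↑((Finset.Icc i k).image l.get) := by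
        intro x hx y hy hxy
        simp only [Finset.coe_image, Set.mem_image, Finset.mem_coe, Finset.mem_Icc] at hx hy
        obtain ⟨jx, ⟨hjx1, hjx2⟩, rfl⟩ := hx
        obtain ⟨jy, ⟨hjy1, hjy2⟩, rfl⟩ := hy
        rcases lt_trichotomy jx jy with h | h | h
        · exact interval_clique G l hprop i k hadj jx jy hjx1 h hjy2
        · exact absurd (congrArg l.get h) hxy
        · exact (interval_clique G l hprop i k hadj jy jx hjy1 h hjx2).symm
      have hcardIcc : ((Finset.Icc i k).image l.get).card = (k : ℕ) + 1 - i := by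
        rw [Finset.card_image_of_injective _ (List.nodup_iff_injective_get.mp hnd),
          Fin.card_Icc]
      have := hω.2 ⟨_, hcl, hcardIcc⟩
      omega
    set i := e.symm u with hi
    set k := e.symm v with hk
    have hgu : l.get i = u := e.apply_symm_apply u
    have hgv : l.get k = v := e.apply_symm_apply v
    have hne : i ≠ k := fun h => G.ne_of_adj huv (by rw [← hgu, ← hgv, h])
    rcases lt_or_gt_of_ne hne with h | h
    · have := key i k h (by rw [hgu, hgv]; exact huv)
      have hik : (i : ℕ) ≤ k := le_of_lt h
      rw [abs_sub_comm]
      rw [abs_of_nonneg (sub_nonneg.mpr (by exact_mod_cast hik))]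
      omega
    · have := key k i h (by rw [hgu, hgv]; exact huv.symm)
      have hik : (k : ℕ) ≤ i := le_of_lt h
      rw [abs_of_nonneg (sub_nonneg.mpr (by exact_mod_cast hik))]
      omega
  -- lower bound : ω ≤ b + 1
  have hωle : ω ≤ b + 1 := by
    rcases le_or_gt ω 1 with h | h
    · omega
    · obtain ⟨σ, hσ⟩ := hb.1
      obtain ⟨s, hscl, hscard⟩ := hω.1
      set t : Finset ℕ := s.image (fun v => (σ v : ℕ)) with ht
      have htcard : t.card = ω := by
        rw [ht, Finset.card_image_of_injective _
          (fun a b hab => σ.injective (Fin.ext hab)), hscard]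
      have htne : t.Nonempty := by rw [← Finset.card_pos, htcard]; omega
      set M := t.max' htne
      set m := t.min' htne
      have hsub : t ⊆ Finset.Icc m M := fun x hx =>
        Finset.mem_Icc.mpr ⟨t.min'_le x hx, t.le_max' x hx⟩
      have hcardle : ω ≤ M + 1 - m := by
        rw [← htcard, ← Nat.card_Icc]; exact Finset.card_le_card hsub
      obtain ⟨u, hu, hσu⟩ := Finset.mem_image.mp (t.max'_mem htne)
      obtain ⟨v, hv, hσv⟩ := Finset.mem_image.mp (t.min'_mem htne)
      have hmM : m < M := by
        rcases eq_or_lt_of_le (t.min'_le M (t.max'_mem htne)) with hEq | hlt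
        · exfalso
          have : t ⊆ {m} := fun x hx => Finset.mem_singleton.mpr
            (le_antisymm (le_of_le_of_eq (t.le_max' x hx) hEq.symm) (t.min'_le x hx))
          have := Finset.card_le_card this
          rw [htcard, Finset.card_singleton] at this; omega
        · exact hlt
      have hne : u ≠ v := fun hEq => by rw [hEq, hσv] at hσu; omega
      have hadj : G.Adj u v := hscl hu hv hne
      have := hσ u v hadj
      rw [hσu, hσv] at this
      rw [abs_of_nonneg (by omega : (0:ℤ) ≤ (M:ℤ) - (m:ℤ))] at this
      omega
  omega
end

section
/- Let X_1,…,X_k be a path decomposition of a graph G with |X_i| = 5 for all i and consecutive bags differing in exactly two vertices, let C be a Hamiltonian cycle of G, and for i < k let C_i be the set of maximal paths of C induced on V_i = X_1 ∪ … ∪ X_i. Then C_i contains at most two trivial (single-vertex) paths. -/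
/-- `a` is immediately followed by `b` somewhere in the list `l`. -/
def ConsecIn {V : Type*} (l : List V) (a b : V) : Prop :=
  ∃ i : ℕ, l[i]? = some a ∧ l[i + 1]? = some b

/-- `a` and `b` are neighbors on the cycle given (in cyclic order) by `l`. -/
def CycleAdjIn {V : Type*} (l : List V) (a b : V) : Prop :=
  ConsecIn (l ++ l.take 1) a b ∨ ConsecIn (l ++ l.take 1) b a

namespace HC12Aux

variable {V : Type*}

/-- cyclic indexing into the list `C`. -/
def gf (C : List V) (hn : 0 < C.length) (j : ℕ) : V :=
  C.get ⟨j % C.length, Nat.mod_lt _ hn⟩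

theorem gf_congr (C : List V) (hn : 0 < C.length) {a b : ℕ}
    (h : a % C.length = b % C.length) : gf C hn a = gf C hn b := by
  unfold gf; congr 1; exact Fin.ext h

theorem gf_add_len (C : List V) (hn : 0 < C.length) (j : ℕ) :
    gf C hn (j + C.length) = gf C hn j :=
  gf_congr C hn (by rw [Nat.add_mod_right])

theorem gf_lt (C : List V) (hn : 0 < C.length) {j : ℕ} (h : j < C.length) :
    gf C hn j = C.get ⟨j, h⟩ := by
  unfold gf; congr 1; exact Fin.ext (Nat.mod_eq_of_lt h)

theorem gf_inj {C : List V} (hn : 0 < C.length) (hnd : C.Nodup) {a b : ℕ}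
    (h : gf C hn a = gf C hn b) : a % C.length = b % C.length :=
  congrArg Fin.val ((hnd.get_inj_iff).mp h)

theorem gf_ne_nil (C : List V) (hn : 0 < C.length) : C ≠ [] :=
  List.length_pos_iff.mp hn

theorem append_getElem? (C : List V) (hn : 0 < C.length) {t : ℕ} (ht : t ≤ C.length) :
    (C ++ C.take 1)[t]? = some (gf C hn t) := by
  rcases lt_or_eq_of_le ht with h | h
  · rw [List.getElem?_append_left h, List.getElem?_eq_getElem h, gf_lt C hn h,
      List.get_eq_getElem]
  · subst h
    rw [List.getElem?_append_right (le_refl _), Nat.sub_self,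
      List.getElem?_take_of_lt (by norm_num : (0:ℕ) < 1), List.getElem?_eq_getElem hn]
    have : gf C hn C.length = gf C hn 0 :=
      gf_congr C hn (by rw [Nat.mod_self, Nat.zero_mod])
    rw [this, gf_lt C hn hn, List.get_eq_getElem]

theorem cycleAdj_gf (C : List V) (hn : 0 < C.length) (j : ℕ) :
    CycleAdjIn C (gf C hn j) (gf C hn (j + 1)) := by
  left
  refine ⟨j % C.length, ?_, ?_⟩
  · rw [append_getElem? C hn (le_of_lt (Nat.mod_lt _ hn))]
    exact congrArg some (gf_congr C hn (Nat.mod_mod_of_dvd _ dvd_rfl))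
  · rw [append_getElem? C hn (Nat.succ_le_of_lt (Nat.mod_lt _ hn))]
    exact congrArg some (gf_congr C hn (by rw [Nat.succ_eq_add_one, Nat.mod_add_mod]))

theorem consec_gf {C : List V} (hn : 0 < C.length) {a b : V}
    (h : ConsecIn (C ++ C.take 1) a b) : ∃ t, a = gf C hn t ∧ b = gf C hn (t + 1) := by
  obtain ⟨t, h1, h2⟩ := h
  have hlen : (C ++ C.take 1).length = C.length + 1 := by
    rw [List.length_append, List.length_take]
    omega
  have ht1 : t + 1 < (C ++ C.take 1).length := by
    by_contra hcon
    rw [List.getElem?_eq_none (le_of_not_gt hcon)] at h2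
    exact Option.some_ne_none b h2.symm
  rw [hlen] at ht1
  rw [append_getElem? C hn (by omega : t ≤ C.length)] at h1
  rw [append_getElem? C hn (by omega : t + 1 ≤ C.length)] at h2
  exact ⟨t, (Option.some_injective _ h1).symm, (Option.some_injective _ h2).symm⟩

theorem adj_gf {G : SimpleGraph V} {C : List V} (hC : IsHamCycle G C) (hn : 0 < C.length)
    (j : ℕ) : G.Adj (gf C hn j) (gf C hn (j + 1)) := by
  obtain ⟨hnd, hall, hch, hlen, hwrap⟩ := hC
  have hj : j % C.length < C.length := Nat.mod_lt _ hn
  rcases lt_or_eq_of_le (Nat.succ_le_of_lt hj) with h | h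
  · rw [Nat.succ_eq_add_one] at h
    have e2 : gf C hn (j + 1) = C.get ⟨j % C.length + 1, h⟩ := by
      rw [show gf C hn (j + 1) = gf C hn (j % C.length + 1) from
        (gf_congr C hn (by rw [Nat.mod_add_mod])).symm]
      exact gf_lt C hn h
    rw [e2]
    exact List.isChain_iff_getElem.mp hch (j % C.length) (by omega)
  · rw [Nat.succ_eq_add_one] at h
    have hne : C ≠ [] := gf_ne_nil C hn
    have h2 : gf C hn j = C.getLast hne := by
      have e : gf C hn j = gf C hn (C.length - 1) :=
        gf_congr C hn (by rw [Nat.mod_eq_of_lt (show C.length - 1 < C.length by omega)]; omega)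
      rw [e, gf_lt C hn (by omega), List.getLast_eq_getElem, List.get_eq_getElem]
    have h3 : gf C hn (j + 1) = C.head hne := by
      have e : gf C hn (j + 1) = gf C hn 0 := gf_congr C hn (by
        rw [← Nat.mod_add_mod, h, Nat.mod_self, Nat.zero_mod])
      rw [e, gf_lt C hn hn, List.head_eq_getElem_zero hne, List.get_eq_getElem]
    rw [h2, h3]
    exact (hwrap hne).symm

theorem adj_of_cycleAdj {G : SimpleGraph V} {C : List V} (hC : IsHamCycle G C)
    (hn : 0 < C.length) {a b : V} (h : CycleAdjIn C a b) : G.Adj a b := by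
  rcases h with h | h <;> obtain ⟨t, rfl, rfl⟩ := consec_gf hn h
  · exact adj_gf hC hn t
  · exact (adj_gf hC hn t).symm

theorem exists_gf_eq [DecidableEq V] {C : List V} (hn : 0 < C.length) {v : V} (hv : v ∈ C) :
    ∃ j < C.length, gf C hn j = v := by
  have h := List.idxOf_lt_length_iff.mpr hv
  exact ⟨C.idxOf v, h, by rw [gf_lt C hn h, List.get_eq_getElem]; exact List.getElem_idxOf h⟩

end HC12Aux

open HC12Aux

/-- A path decomposition of `G` with bags `X 0, …, X (k-1)`. -/
structure IsPathDecomp {V : Type*} (G : SimpleGraph V) (k : ℕ) (X : Fin k → Finset V) : Prop where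
  covers : ∀ v, ∃ i, v ∈ X i
  covers_edge : ∀ ⦃u v⦄, G.Adj u v → ∃ i, u ∈ X i ∧ v ∈ X i
  interval : ∀ v (i j k : Fin k), i ≤ j → j ≤ k → v ∈ X i → v ∈ X k → v ∈ X j

/-- In a path decomposition with all bags of size `5` and consecutive bags
differing in exactly two vertices, for `i` with a successor bag, the restriction
`C ∩ G[V_i]` of a Hamiltonian cycle `C` contains at most two trivial paths,
i.e. at most two vertices of `V_i` have no cycle-neighbor in `V_i`. -/
theorem statement_12 {V : Type*} [DecidableEq V] (G : SimpleGraph V) (k : ℕ)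
    (X : Fin k → Finset V) (hX : IsPathDecomp G k X)
    (hsize : ∀ a, (X a).card = 5)
    (hdiff : ∀ a b : Fin k, (b : ℕ) = (a : ℕ) + 1 →
      ((X a) \ (X b)).card = 1 ∧ ((X b) \ (X a)).card = 1)
    (C : List V) (hC : IsHamCycle G C)
    (i : Fin k) (hik : (i : ℕ) + 1 < k)
    (Vi : Set V) (hVi : Vi = {v | ∃ a : Fin k, a ≤ i ∧ v ∈ X a}) :
    {v | v ∈ Vi ∧ ∀ w, CycleAdjIn C v w → w ∉ Vi}.ncard ≤ 2 := by
  classical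
  subst hVi
  have hnd : C.Nodup := hC.1
  have hall : ∀ v, v ∈ C := hC.2.1
  have hlen3 : 3 ≤ C.length := hC.2.2.2.1
  have hn : 0 < C.length := by omega
  set n := C.length with hnn
  set i' : Fin k := ⟨(i : ℕ) + 1, hik⟩ with hi'
  have hi'val : (i' : ℕ) = (i : ℕ) + 1 := rfl
  have hii' : i ≤ i' := by rw [Fin.le_def, hi'val]; omega
  obtain ⟨hd1, hd2⟩ := hdiff i i' rfl
  -- the forgotten vertex u and the new vertex y
  obtain ⟨u, hu⟩ := Finset.card_eq_one.mp hd1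
  have huu : u ∈ X i \ X i' := hu ▸ Finset.mem_singleton_self u
  have hu1 : u ∈ X i := (Finset.mem_sdiff.mp huu).1
  have hu2 : u ∉ X i' := (Finset.mem_sdiff.mp huu).2
  obtain ⟨y, hy⟩ := Finset.card_eq_one.mp hd2
  have hyy : y ∈ X i' \ X i := hy ▸ Finset.mem_singleton_self y
  have hy1 : y ∈ X i' := (Finset.mem_sdiff.mp hyy).1
  have hy2 : y ∉ X i := (Finset.mem_sdiff.mp hyy).2
  -- basic membership facts
  have huVi : u ∈ {v | ∃ a : Fin k, a ≤ i ∧ v ∈ X a} := ⟨i, le_refl i, hu1⟩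
  have hyVi : y ∉ {v | ∃ a : Fin k, a ≤ i ∧ v ∈ X a} := by
    rintro ⟨a, hai, hya⟩
    exact hy2 (hX.interval y a i i' hai hii' hya hy1)
  -- boundary lemma
  have hbd : ∀ v w, v ∈ {v | ∃ a : Fin k, a ≤ i ∧ v ∈ X a} →
      w ∉ {v | ∃ a : Fin k, a ≤ i ∧ v ∈ X a} → G.Adj v w → v ∈ X i ∧ v ∈ X i' := by
    rintro v w ⟨a, hai, hva⟩ hw hadj
    obtain ⟨b, hvb, hwb⟩ := hX.covers_edge hadj
    have hbi : ¬ b ≤ i := fun hb => hw ⟨b, hb, hwb⟩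
    have hib : i ≤ b := le_of_lt (lt_of_not_ge hbi)
    have hi'b : i' ≤ b := by
      rw [Fin.le_def]; rw [Fin.le_def] at hbi; omega
    exact ⟨hX.interval v a i b hai hib hva hvb,
      hX.interval v a i' b (le_trans hai hii') hi'b hva hvb⟩
  -- u's cycle neighbours are inside
  have hunb : ∀ w, CycleAdjIn C u w → w ∈ {v | ∃ a : Fin k, a ≤ i ∧ v ∈ X a} := by
    intro w hw
    have hadj := adj_of_cycleAdj hC hn hw
    obtain ⟨b, hub, hwb⟩ := hX.covers_edge hadj
    have hbi : b ≤ i := by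
      by_contra hb
      have hi'b : i' ≤ b := by
        rw [Fin.le_def]; rw [Fin.le_def] at hb; omega
      exact hu2 (hX.interval u i i' b hii' hi'b hu1 hub)
    exact ⟨b, hbi, hwb⟩
  -- positions of u and y on the cycle
  obtain ⟨j0, hj0, hgu⟩ := exists_gf_eq hn (hall u)
  obtain ⟨j1, hj1, hgy⟩ := exists_gf_eq hn (hall y)
  have huy : u ≠ y := fun h => hy2 (h ▸ hu1)
  have hj01 : j0 ≠ j1 := fun h => huy (by rw [← hgu, h, hgy])
  -- forward and backward return times to y's position
  have hexf : ∃ t, 1 ≤ t ∧ t ≤ n - 1 ∧ gf C hn (j0 + t) = gf C hn j1 := by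
    rcases Nat.lt_or_ge (j1 + n - j0) n with h | h
    · refine ⟨j1 + n - j0, by omega, by omega, ?_⟩
      rw [show j0 + (j1 + n - j0) = j1 + n by omega]
      exact gf_add_len C hn j1
    · refine ⟨j1 - j0, by omega, by omega, ?_⟩
      rw [show j0 + (j1 - j0) = j1 by omega]
  have hexb : ∃ t, 1 ≤ t ∧ t ≤ n - 1 ∧ gf C hn (j0 + n - t) = gf C hn j1 := by
    rcases Nat.lt_or_ge (j0 + n - j1) n with h | h
    · refine ⟨j0 + n - j1, by omega, by omega, ?_⟩
      rw [show j0 + n - (j0 + n - j1) = j1 by omega]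
    · refine ⟨j0 - j1, by omega, by omega, ?_⟩
      rw [show j0 + n - (j0 - j1) = j1 + n by omega]
      exact gf_add_len C hn j1
  obtain ⟨tf, htf1, htfn, htfeq⟩ := hexf
  obtain ⟨tb, htb1, htbn, htbeq⟩ := hexb
  -- forward exit
  have hPex : ∃ m, gf C hn (j0 + m) ∉ {v | ∃ a : Fin k, a ≤ i ∧ v ∈ X a} :=
    ⟨tf, by rw [htfeq, hgy]; exact hyVi⟩
  set m := Nat.find hPex with hmdef
  have hPm : gf C hn (j0 + m) ∉ {v | ∃ a : Fin k, a ≤ i ∧ v ∈ X a} := Nat.find_spec hPex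
  have hmin : ∀ t < m, gf C hn (j0 + t) ∈ {v | ∃ a : Fin k, a ≤ i ∧ v ∈ X a} :=
    fun t ht => not_not.mp (Nat.find_min hPex ht)
  have hmle : m ≤ tf := Nat.find_le (by rw [htfeq, hgy]; exact hyVi)
  have hm2 : 2 ≤ m := by
    have h0 : gf C hn (j0 + 0) ∈ {v | ∃ a : Fin k, a ≤ i ∧ v ∈ X a} := by
      rw [Nat.add_zero, hgu]; exact huVi
    have h1 : gf C hn (j0 + 1) ∈ {v | ∃ a : Fin k, a ≤ i ∧ v ∈ X a} :=
      hunb _ (by have := cycleAdj_gf C hn j0; rwa [hgu] at this)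
    by_contra hcon
    have : m = 0 ∨ m = 1 := by omega
    rcases this with h | h <;> rw [h] at hPm
    · exact hPm h0
    · exact hPm h1
  -- backward exit
  have hP'ex : ∃ m, gf C hn (j0 + n - m) ∉ {v | ∃ a : Fin k, a ≤ i ∧ v ∈ X a} :=
    ⟨tb, by rw [htbeq, hgy]; exact hyVi⟩
  set m' := Nat.find hP'ex with hm'def
  have hP'm : gf C hn (j0 + n - m') ∉ {v | ∃ a : Fin k, a ≤ i ∧ v ∈ X a} :=
    Nat.find_spec hP'ex
  have hmin' : ∀ t < m', gf C hn (j0 + n - t) ∈ {v | ∃ a : Fin k, a ≤ i ∧ v ∈ X a} :=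
    fun t ht => not_not.mp (Nat.find_min hP'ex ht)
  have hm'le : m' ≤ tb := Nat.find_le (by rw [htbeq, hgy]; exact hyVi)
  have hm'2 : 2 ≤ m' := by
    have h0 : gf C hn (j0 + n - 0) ∈ {v | ∃ a : Fin k, a ≤ i ∧ v ∈ X a} := by
      rw [Nat.sub_zero, gf_add_len C hn j0, hgu]; exact huVi
    have h1 : gf C hn (j0 + n - 1) ∈ {v | ∃ a : Fin k, a ≤ i ∧ v ∈ X a} := by
      refine hunb _ (Or.symm ?_)
      have := cycleAdj_gf C hn (j0 + n - 1)
      rw [show j0 + n - 1 + 1 = j0 + n by omega, gf_add_len C hn j0, hgu] at this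
      rcases this with h | h
      · exact Or.inl h
      · exact Or.inr h
    by_contra hcon
    have : m' = 0 ∨ m' = 1 := by omega
    rcases this with h | h <;> rw [h] at hP'm
    · exact hP'm h0
    · exact hP'm h1
  -- the two endpoints p and q
  set p := gf C hn (j0 + (m - 1)) with hpdef
  set q := gf C hn (j0 + n - (m' - 1)) with hqdef
  have hpVi : p ∈ {v | ∃ a : Fin k, a ≤ i ∧ v ∈ X a} := hmin (m - 1) (by omega)
  have hqVi : q ∈ {v | ∃ a : Fin k, a ≤ i ∧ v ∈ X a} := hmin' (m' - 1) (by omega)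
  have hpX : p ∈ X i ∧ p ∈ X i' := by
    refine hbd p (gf C hn (j0 + (m - 1) + 1)) hpVi ?_ (adj_gf hC hn _)
    rw [show j0 + (m - 1) + 1 = j0 + m by omega]
    exact hPm
  have hqX : q ∈ X i ∧ q ∈ X i' := by
    have hadj := adj_gf hC hn (j0 + n - m')
    rw [show j0 + n - m' + 1 = j0 + n - (m' - 1) by omega] at hadj
    exact hbd q (gf C hn (j0 + n - m')) hqVi hP'm hadj.symm
  have hpnt : ∃ w, w ∈ {v | ∃ a : Fin k, a ≤ i ∧ v ∈ X a} ∧ CycleAdjIn C p w := by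
    refine ⟨gf C hn (j0 + (m - 2)), hmin (m - 2) (by omega), Or.symm ?_⟩
    have := cycleAdj_gf C hn (j0 + (m - 2))
    rw [show j0 + (m - 2) + 1 = j0 + (m - 1) by omega] at this
    rcases this with h | h
    · exact Or.inl h
    · exact Or.inr h
  have hqnt : ∃ w, w ∈ {v | ∃ a : Fin k, a ≤ i ∧ v ∈ X a} ∧ CycleAdjIn C q w := by
    refine ⟨gf C hn (j0 + n - (m' - 2)), hmin' (m' - 2) (by omega), ?_⟩
    have := cycleAdj_gf C hn (j0 + n - (m' - 1))
    rw [show j0 + n - (m' - 1) + 1 = j0 + n - (m' - 2) by omega] at this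
    exact this
  -- p and q are distinct
  have hpq : p ≠ q := by
    intro hpqeq
    have hmod := gf_inj hn hnd (hpdef ▸ hqdef ▸ hpqeq)
    rw [show j0 + n - (m' - 1) = j0 + (n - (m' - 1)) by omega] at hmod
    have hME : (m - 1) % n = (n - (m' - 1)) % n :=
      Nat.ModEq.add_left_cancel' j0 hmod
    rw [Nat.mod_eq_of_lt (by omega), Nat.mod_eq_of_lt (by omega)] at hME
    have hmm' : m + m' = n + 2 := by omega
    rcases Nat.lt_or_ge tf m with h | h
    · have := hmin tf h
      rw [htfeq, hgy] at this
      exact hyVi this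
    · have hs : n - tf < m' := by omega
      have := hmin' (n - tf) hs
      rw [show j0 + n - (n - tf) = j0 + tf by omega, htfeq, hgy] at this
      exact hyVi this
  -- final counting
  have hsub : {v | v ∈ {v | ∃ a : Fin k, a ≤ i ∧ v ∈ X a} ∧
      ∀ w, CycleAdjIn C v w → w ∉ {v | ∃ a : Fin k, a ≤ i ∧ v ∈ X a}} ⊆
      ↑((X i ∩ X i') \ {p, q}) := by
    rintro v ⟨hvVi, hvtriv⟩
    obtain ⟨jv, hjv, hgv⟩ := exists_gf_eq hn (hall v)
    have hw : CycleAdjIn C v (gf C hn (jv + 1)) := by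
      have := cycleAdj_gf C hn jv; rwa [hgv] at this
    have hwout := hvtriv _ hw
    have hadj : G.Adj v (gf C hn (jv + 1)) := by
      have := adj_gf hC hn jv; rwa [hgv] at this
    have hvX := hbd v _ hvVi hwout hadj
    rw [Finset.mem_coe, Finset.mem_sdiff]
    refine ⟨Finset.mem_inter.mpr hvX, ?_⟩
    intro hmem
    rcases Finset.mem_insert.mp hmem with h | h
    · obtain ⟨w, hwVi, hwadj⟩ := hpnt
      exact hvtriv w (h ▸ hwadj) hwVi
    · rw [Finset.mem_singleton] at h
      obtain ⟨w, hwVi, hwadj⟩ := hqnt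
      exact hvtriv w (h ▸ hwadj) hwVi
  have hScard : (X i ∩ X i').card = 4 := by
    have h5 := hsize i
    have := Finset.card_sdiff_add_card_inter (X i) (X i')
    omega
  have hpqsub : ({p, q} : Finset V) ⊆ X i ∩ X i' := by
    intro x hx
    rcases Finset.mem_insert.mp hx with h | h
    · exact h ▸ Finset.mem_inter.mpr hpX
    · rw [Finset.mem_singleton] at h
      exact h ▸ Finset.mem_inter.mpr hqX
  calc {v | v ∈ {v | ∃ a : Fin k, a ≤ i ∧ v ∈ X a} ∧
      ∀ w, CycleAdjIn C v w → w ∉ {v | ∃ a : Fin k, a ≤ i ∧ v ∈ X a}}.ncard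
      ≤ (((X i ∩ X i') \ {p, q} : Finset V) : Set V).ncard :=
        Set.ncard_le_ncard hsub (Finset.finite_toSet _)
    _ = ((X i ∩ X i') \ {p, q} : Finset V).card := Set.ncard_coe_finset _
    _ ≤ 2 := by
        rw [Finset.card_sdiff_of_subset hpqsub, hScard, Finset.card_pair hpq]
end

section
/- Let X_1,…,X_k be a path decomposition of a graph G with all bags of size 5 and consecutive bags differing in exactly two vertices, let C be a Hamiltonian cycle of G, and for 1 ≤ i < k let C_i be the maximal paths of C induced on V_i = X_1 ∪ … ∪ X_i. Then either (a) C_i contains exactly one non-trivial path together with at most two trivial paths, or (b) C_i contains exactly two non-trivial paths and no trivial path. In particular C_i never contains three non-trivial paths. -/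
set_option linter.unusedVariables false
set_option linter.unusedSectionVars false

namespace S13
variable {V : Type*} [DecidableEq V]

def nxt (C : List V) (v : V) : V := C.getD ((C.idxOf v + 1) % C.length) v
def prv (C : List V) (v : V) : V := C.getD ((C.idxOf v + (C.length - 1)) % C.length) v

section
variable {C : List V}

lemma idx_lt (hmem : ∀ v, v ∈ C) (v : V) : C.idxOf v < C.length :=
  List.idxOf_lt_length_iff.2 (hmem v)

lemma nxt_eq (hmem : ∀ v, v ∈ C) (hlen : 3 ≤ C.length) (v : V) :
    nxt C v = C[(C.idxOf v + 1) % C.length]'(Nat.mod_lt _ (by omega)) :=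
  List.getD_eq_getElem _ _ _

lemma prv_eq (hmem : ∀ v, v ∈ C) (hlen : 3 ≤ C.length) (v : V) :
    prv C v = C[(C.idxOf v + (C.length - 1)) % C.length]'(Nat.mod_lt _ (by omega)) :=
  List.getD_eq_getElem _ _ _

lemma indexOf_nxt (hnd : C.Nodup) (hmem : ∀ v, v ∈ C) (hlen : 3 ≤ C.length) (v : V) :
    C.idxOf (nxt C v) = (C.idxOf v + 1) % C.length := by
  rw [nxt_eq hmem hlen, List.Nodup.idxOf_getElem hnd]

lemma indexOf_prv (hnd : C.Nodup) (hmem : ∀ v, v ∈ C) (hlen : 3 ≤ C.length) (v : V) :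
    C.idxOf (prv C v) = (C.idxOf v + (C.length - 1)) % C.length := by
  rw [prv_eq hmem hlen, List.Nodup.idxOf_getElem hnd]

lemma prv_nxt (hnd : C.Nodup) (hmem : ∀ v, v ∈ C) (hlen : 3 ≤ C.length) (v : V) :
    prv C (nxt C v) = v := by
  have h2 : C.idxOf v < C.length := idx_lt hmem v
  have key : (C.idxOf (nxt C v) + (C.length - 1)) % C.length = C.idxOf v := by
    rw [indexOf_nxt hnd hmem hlen, Nat.mod_add_mod]
    have h1 : C.idxOf v + 1 + (C.length - 1) = C.idxOf v + C.length := by omega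
    rw [h1, Nat.add_mod_right, Nat.mod_eq_of_lt h2]
  rw [prv, key, List.getD_eq_getElem _ _ h2]
  exact List.getElem_idxOf h2

lemma nxt_prv (hnd : C.Nodup) (hmem : ∀ v, v ∈ C) (hlen : 3 ≤ C.length) (v : V) :
    nxt C (prv C v) = v := by
  have h2 : C.idxOf v < C.length := idx_lt hmem v
  have key : (C.idxOf (prv C v) + 1) % C.length = C.idxOf v := by
    rw [indexOf_prv hnd hmem hlen, Nat.mod_add_mod]
    have h1 : C.idxOf v + (C.length - 1) + 1 = C.idxOf v + C.length := by omega
    rw [h1, Nat.add_mod_right, Nat.mod_eq_of_lt h2]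
  rw [nxt, key, List.getD_eq_getElem _ _ h2]
  exact List.getElem_idxOf h2

lemma nxt_injective (hnd : C.Nodup) (hmem : ∀ v, v ∈ C) (hlen : 3 ≤ C.length) :
    Function.Injective (nxt C) := by
  intro a b h
  have := congrArg (prv C) h
  rwa [prv_nxt hnd hmem hlen, prv_nxt hnd hmem hlen] at this

lemma prv_ne_nxt (hnd : C.Nodup) (hmem : ∀ v, v ∈ C) (hlen : 3 ≤ C.length) (v : V) :
    prv C v ≠ nxt C v := by
  intro h
  have h2 := congrArg (C.idxOf ·) h
  simp only [indexOf_prv hnd hmem hlen, indexOf_nxt hnd hmem hlen] at h2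
  have h3 : Nat.ModEq C.length (C.idxOf v + (C.length - 1)) (C.idxOf v + 1) := h2
  have h4 := Nat.ModEq.add_left_cancel' (C.idxOf v) h3
  have h5 : (C.length - 1) % C.length = 1 % C.length := h4
  rw [Nat.mod_eq_of_lt (by omega), Nat.mod_eq_of_lt (by omega)] at h5
  omega

lemma nxt_ne (hnd : C.Nodup) (hmem : ∀ v, v ∈ C) (hlen : 3 ≤ C.length) (v : V) :
    nxt C v ≠ v := by
  intro h
  have h2 := congrArg (C.idxOf ·) h
  simp only [indexOf_nxt hnd hmem hlen] at h2
  have h3 : C.idxOf v < C.length := idx_lt hmem v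
  rcases Nat.lt_or_ge (C.idxOf v + 1) C.length with h4 | h4
  · rw [Nat.mod_eq_of_lt h4] at h2; omega
  · have h5 : C.idxOf v + 1 = C.length := by omega
    rw [h5, Nat.mod_self] at h2; omega

lemma consec_iff (hlen : 3 ≤ C.length) {a b : V} :
    ConsecIn (C ++ C.take 1) a b ↔
      ∃ j : ℕ, ∃ h : j < C.length,
        C[j] = a ∧ C[(j + 1) % C.length]'(Nat.mod_lt _ (by omega)) = b := by
  have h0 : 0 < C.length := by omega
  constructor
  · rintro ⟨j, h1, h2⟩
    rcases Nat.lt_or_ge (j + 1) C.length with h4 | h4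
    · rw [List.getElem?_append_left (by omega)] at h1
      rw [List.getElem?_append_left h4] at h2
      obtain ⟨_, ha⟩ := List.getElem?_eq_some_iff.1 h1
      obtain ⟨_, hb⟩ := List.getElem?_eq_some_iff.1 h2
      refine ⟨j, by omega, ha, ?_⟩
      simp only [Nat.mod_eq_of_lt h4]
      exact hb
    · have hj1 : j + 1 < (C ++ C.take 1).length := by
        obtain ⟨h, _⟩ := List.getElem?_eq_some_iff.1 h2
        exact h
      have hlap : (C ++ C.take 1).length = C.length + 1 := by
        rw [List.length_append, List.length_take]; omega
      have hj : j + 1 = C.length := by omega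
      rw [List.getElem?_append_left (by omega)] at h1
      rw [List.getElem?_append_right (by omega)] at h2
      obtain ⟨_, ha⟩ := List.getElem?_eq_some_iff.1 h1
      obtain ⟨hb0, hb⟩ := List.getElem?_eq_some_iff.1 h2
      refine ⟨j, by omega, ha, ?_⟩
      simp only [show (j + 1) % C.length = 0 by rw [hj, Nat.mod_self]]
      simp only [show j + 1 - C.length = 0 by omega] at hb
      rw [← hb, List.getElem_take]
  · rintro ⟨j, hj, ha, hb⟩
    refine ⟨j, ?_, ?_⟩
    · rw [List.getElem?_append_left (by omega)]
      exact List.getElem?_eq_some_iff.2 ⟨by omega, ha⟩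
    · rcases Nat.lt_or_ge (j + 1) C.length with h4 | h4
      · rw [List.getElem?_append_left h4]
        refine List.getElem?_eq_some_iff.2 ⟨h4, ?_⟩
        simp only [Nat.mod_eq_of_lt h4] at hb
        exact hb
      · have hj1 : j + 1 = C.length := by omega
        rw [List.getElem?_append_right (by omega)]
        refine List.getElem?_eq_some_iff.2 ⟨by rw [List.length_take]; omega, ?_⟩
        rw [List.getElem_take]
        simp only [show (j + 1) % C.length = 0 by rw [hj1, Nat.mod_self]] at hb
        simp only [show j + 1 - C.length = 0 by omega]
        exact hb

lemma consec_nxt_iff (hnd : C.Nodup) (hmem : ∀ v, v ∈ C) (hlen : 3 ≤ C.length) {a b : V} :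
    ConsecIn (C ++ C.take 1) a b ↔ b = nxt C a := by
  rw [consec_iff hlen]
  constructor
  · rintro ⟨j, hj, ha, hb⟩
    have : C.idxOf a = j := by rw [← ha, List.Nodup.idxOf_getElem hnd]
    rw [nxt_eq hmem hlen, this]
    exact hb.symm
  · rintro rfl
    have hj : C.idxOf a < C.length := idx_lt hmem a
    exact ⟨C.idxOf a, hj, List.getElem_idxOf hj, (nxt_eq hmem hlen a).symm⟩

lemma cycleAdj_iff (hnd : C.Nodup) (hmem : ∀ v, v ∈ C) (hlen : 3 ≤ C.length) {a b : V} :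
    CycleAdjIn C a b ↔ (b = nxt C a ∨ b = prv C a) := by
  unfold CycleAdjIn
  rw [consec_nxt_iff hnd hmem hlen, consec_nxt_iff hnd hmem hlen]
  constructor
  · rintro (h | h)
    · exact Or.inl h
    · right; rw [h, prv_nxt hnd hmem hlen]
  · rintro (h | h)
    · exact Or.inl h
    · right; rw [h, nxt_prv hnd hmem hlen]

lemma adj_nxt {G : SimpleGraph V} (hnd : C.Nodup) (hmem : ∀ v, v ∈ C) (hlen : 3 ≤ C.length)
    (hchain : C.Chain' G.Adj) (hcyc : ∀ h : C ≠ [], G.Adj (C.head h) (C.getLast h)) (v : V) :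
    G.Adj v (nxt C v) := by
  have hne : C ≠ [] := by intro h; rw [h] at hlen; simp at hlen
  have hj : C.idxOf v < C.length := idx_lt hmem v
  have hv : C[C.idxOf v] = v := List.getElem_idxOf hj
  rcases Nat.lt_or_ge (C.idxOf v + 1) C.length with h4 | h4
  · have := List.isChain_iff_getElem.1 hchain (C.idxOf v) (by omega)
    rw [nxt_eq hmem hlen]
    simp only [Nat.mod_eq_of_lt h4]
    rwa [hv] at this
  · have hj1 : C.idxOf v + 1 = C.length := by omega
    have := (hcyc hne).symm
    rw [List.head_eq_getElem_zero hne, List.getLast_eq_getElem] at this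
    rw [nxt_eq hmem hlen]
    simp only [show (C.idxOf v + 1) % C.length = 0 by rw [hj1, Nat.mod_self]]
    have hvl : C[C.length - 1] = v := by
      simp only [show C.length - 1 = C.idxOf v by omega]; exact hv
    rwa [hvl] at this

lemma nxt_getD (hnd : C.Nodup) (hmem : ∀ v, v ∈ C) (hlen : 3 ≤ C.length)
    {m : ℕ} (hm : m < C.length) (d : V) :
    nxt C (C.getD m d) = C.getD ((m + 1) % C.length) d := by
  rw [List.getD_eq_getElem _ _ hm, List.getD_eq_getElem _ _ (Nat.mod_lt _ (by omega)),
    nxt_eq hmem hlen]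
  simp only [List.Nodup.idxOf_getElem hnd]

lemma iterate_nxt (hnd : C.Nodup) (hmem : ∀ v, v ∈ C) (hlen : 3 ≤ C.length) (u : V) (t : ℕ) :
    (nxt C)^[t] u = C.getD ((C.idxOf u + t) % C.length) u := by
  induction t with
  | zero =>
    have h := idx_lt hmem u
    rw [Function.iterate_zero_apply, Nat.add_zero, Nat.mod_eq_of_lt h,
      List.getD_eq_getElem _ _ h, List.getElem_idxOf h]
  | succ t ih =>
    rw [Function.iterate_succ_apply', ih, nxt_getD hnd hmem hlen (Nat.mod_lt _ (by omega)) u,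
      Nat.mod_add_mod, ← Nat.add_assoc]

lemma adj_prv {G : SimpleGraph V} (hnd : C.Nodup) (hmem : ∀ v, v ∈ C) (hlen : 3 ≤ C.length)
    (hchain : C.Chain' G.Adj) (hcyc : ∀ h : C ≠ [], G.Adj (C.head h) (C.getLast h)) (v : V) :
    G.Adj v (prv C v) := by
  have := (adj_nxt hnd hmem hlen hchain hcyc (prv C v)).symm
  rwa [nxt_prv hnd hmem hlen] at this

end
end S13


/-- For a path decomposition with all bags of size `5`, consecutive bags
differing in exactly two vertices, and `i` with a successor bag, the restriction
`C ∩ G[V_i]` of a Hamiltonian cycle `C` either consists of exactly one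
non-trivial path (two path-endpoints) together with at most two trivial paths,
or of exactly two non-trivial paths (four path-endpoints) and no trivial path.
Endpoints are the vertices of `V_i` with exactly one cycle-neighbor in `V_i`;
trivial paths are the vertices of `V_i` with no cycle-neighbor in `V_i`. -/
theorem statement_13 {V : Type*} [DecidableEq V] (G : SimpleGraph V) (k : ℕ)
    (X : Fin k → Finset V) (hX : IsPathDecomp G k X)
    (hsize : ∀ a, (X a).card = 5)
    (hdiff : ∀ a b : Fin k, (b : ℕ) = (a : ℕ) + 1 →
      ((X a) \ (X b)).card = 1 ∧ ((X b) \ (X a)).card = 1)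
    (C : List V) (hC : IsHamCycle G C)
    (i : Fin k) (hik : (i : ℕ) + 1 < k)
    (Vi : Set V) (hVi : Vi = {v | ∃ a : Fin k, a ≤ i ∧ v ∈ X a})
    (Ends Triv : Set V)
    (hEnds : Ends = {v | v ∈ Vi ∧ {w | w ∈ Vi ∧ CycleAdjIn C v w}.ncard = 1})
    (hTriv : Triv = {v | v ∈ Vi ∧ ∀ w, CycleAdjIn C v w → w ∉ Vi}) :
    (Ends.ncard = 2 ∧ Triv.ncard ≤ 2) ∨ (Ends.ncard = 4 ∧ Triv.ncard = 0) := by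
  classical
  obtain ⟨hnd, hmem, hchain, hlen, hcyc⟩ := hC
  haveI : Fintype V := Fintype.ofList C hmem
  set j : Fin k := ⟨(i : ℕ) + 1, hik⟩ with hjdef
  have hij : i ≤ j := by rw [Fin.le_def]; simp [hjdef]
  have hdiff1 : ((X i) \ (X j)).card = 1 := (hdiff i j rfl).1
  have hdiff2 : ((X j) \ (X i)).card = 1 := (hdiff i j rfl).2
  have hViMem : ∀ v, v ∈ Vi ↔ ∃ a : Fin k, a ≤ i ∧ v ∈ X a := fun v => by
    rw [hVi]; exact Iff.rfl
  have hadjchar : ∀ a b : V, CycleAdjIn C a b ↔ (b = S13.nxt C a ∨ b = S13.prv C a) :=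
    fun a b => S13.cycleAdj_iff hnd hmem hlen
  have hGadj : ∀ v w : V, CycleAdjIn C v w → G.Adj v w := by
    intro v w h
    rcases (hadjchar v w).1 h with rfl | rfl
    · exact S13.adj_nxt hnd hmem hlen hchain hcyc v
    · exact S13.adj_prv hnd hmem hlen hchain hcyc v
  -- crossing lemma: an edge of the cycle leaving `Vi` starts in `X i ∩ X j`
  have hcross : ∀ v w : V, v ∈ Vi → w ∉ Vi → CycleAdjIn C v w → v ∈ X i ∧ v ∈ X j := by
    intro v w hv hw hadj
    obtain ⟨a, hva, hwa⟩ := hX.covers_edge (hGadj v w hadj)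
    have hia : ¬ a ≤ i := fun h => hw ((hViMem w).2 ⟨a, h, hwa⟩)
    obtain ⟨b, hbi, hvb⟩ := (hViMem v).1 hv
    have hia2 : (i : ℕ) < (a : ℕ) := Fin.lt_def.mp (Fin.not_le.mp hia)
    have hja : j ≤ a := by
      rw [Fin.le_def]
      show (i : ℕ) + 1 ≤ (a : ℕ)
      omega
    exact ⟨hX.interval v b i a hbi (le_trans hij hja) hvb hva,
      hX.interval v b j a (le_trans hbi hij) hja hvb hva⟩
  set Bp : Set V := {v | v ∈ Vi ∧ S13.nxt C v ∉ Vi} with hBp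
  set Bm : Set V := {v | v ∈ Vi ∧ S13.prv C v ∉ Vi} with hBm
  have hBpS : Bp ⊆ ((X i ∩ X j : Finset V) : Set V) := by
    rintro v ⟨h1, h2⟩
    have := hcross v _ h1 h2 ((hadjchar v _).2 (Or.inl rfl))
    simpa using this
  have hBmS : Bm ⊆ ((X i ∩ X j : Finset V) : Set V) := by
    rintro v ⟨h1, h2⟩
    have := hcross v _ h1 h2 ((hadjchar v _).2 (Or.inr rfl))
    simpa using this
  have hnbhd : ∀ v : V,
      {w | w ∈ Vi ∧ CycleAdjIn C v w} = Vi ∩ {S13.nxt C v, S13.prv C v} := by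
    intro v; ext w
    simp only [Set.mem_setOf_eq, Set.mem_inter_iff, Set.mem_insert_iff,
      Set.mem_singleton_iff, hadjchar]
  have hpairne : ∀ v : V, S13.nxt C v ≠ S13.prv C v :=
    fun v => (S13.prv_ne_nxt hnd hmem hlen v).symm
  have hEnds_eq : Ends = (Bp \ Bm) ∪ (Bm \ Bp) := by
    rw [hEnds]; ext v
    simp only [Set.mem_setOf_eq, hnbhd, Set.mem_union, Set.mem_diff, hBp, hBm,
      Set.mem_setOf_eq]
    by_cases hv : v ∈ Vi
    · by_cases h1 : S13.nxt C v ∈ Vi <;> by_cases h2 : S13.prv C v ∈ Vi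
      · have hset : Vi ∩ {S13.nxt C v, S13.prv C v} = {S13.nxt C v, S13.prv C v} := by
          apply Set.inter_eq_right.2
          rintro w (rfl | rfl) <;> assumption
        rw [hset, Set.ncard_pair (hpairne v)]
        have h21 : (2 : ℕ) ≠ 1 := by omega
        tauto
      · have hset : Vi ∩ {S13.nxt C v, S13.prv C v} = {S13.nxt C v} := by
          ext w
          simp only [Set.mem_inter_iff, Set.mem_insert_iff, Set.mem_singleton_iff]
          constructor
          · rintro ⟨hw, rfl | rfl⟩
            · rfl
            · exact absurd hw h2
          · rintro rfl; exact ⟨h1, Or.inl rfl⟩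
        rw [hset, Set.ncard_singleton]
        tauto
      · have hset : Vi ∩ {S13.nxt C v, S13.prv C v} = {S13.prv C v} := by
          ext w
          simp only [Set.mem_inter_iff, Set.mem_insert_iff, Set.mem_singleton_iff]
          constructor
          · rintro ⟨hw, rfl | rfl⟩
            · exact absurd hw h1
            · rfl
          · rintro rfl; exact ⟨h2, Or.inr rfl⟩
        rw [hset, Set.ncard_singleton]
        tauto
      · have hset : Vi ∩ {S13.nxt C v, S13.prv C v} = ∅ := by
          ext w
          simp only [Set.mem_inter_iff, Set.mem_insert_iff, Set.mem_singleton_iff,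
            Set.mem_empty_iff_false, iff_false, not_and]
          rintro hw (rfl | rfl)
          · exact h1 hw
          · exact h2 hw
        rw [hset, Set.ncard_empty]
        have h01 : (0 : ℕ) ≠ 1 := by omega
        tauto
    · tauto
  have hTriv_eq : Triv = Bp ∩ Bm := by
    rw [hTriv]; ext v
    simp only [Set.mem_setOf_eq, Set.mem_inter_iff, hBp, hBm, Set.mem_setOf_eq]
    constructor
    · rintro ⟨hv, h⟩
      exact ⟨⟨hv, h _ ((hadjchar v _).2 (Or.inl rfl))⟩,
        ⟨hv, h _ ((hadjchar v _).2 (Or.inr rfl))⟩⟩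
    · rintro ⟨⟨hv, h1⟩, ⟨_, h2⟩⟩
      refine ⟨hv, fun w hw => ?_⟩
      rcases (hadjchar v w).1 hw with rfl | rfl
      exacts [h1, h2]
  -- |Bp| = |Bm|
  have hinj_nxt : Function.Injective (S13.nxt C) := S13.nxt_injective hnd hmem hlen
  have hinj_prv : Function.Injective (S13.prv C) := by
    intro a b h
    have := congrArg (S13.nxt C) h
    rwa [S13.nxt_prv hnd hmem hlen, S13.nxt_prv hnd hmem hlen] at this
  have him1 : S13.nxt C '' Bp = (S13.nxt C '' Vi) \ Vi := by
    ext w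
    simp only [Set.mem_image, hBp, Set.mem_setOf_eq, Set.mem_diff]
    constructor
    · rintro ⟨v, ⟨hv, hnv⟩, rfl⟩; exact ⟨⟨v, hv, rfl⟩, hnv⟩
    · rintro ⟨⟨v, hv, rfl⟩, hw⟩; exact ⟨v, ⟨hv, hw⟩, rfl⟩
  have him2 : S13.prv C '' Bm = (S13.prv C '' Vi) \ Vi := by
    ext w
    simp only [Set.mem_image, hBm, Set.mem_setOf_eq, Set.mem_diff]
    constructor
    · rintro ⟨v, ⟨hv, hnv⟩, rfl⟩; exact ⟨⟨v, hv, rfl⟩, hnv⟩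
    · rintro ⟨⟨v, hv, rfl⟩, hw⟩; exact ⟨v, ⟨hv, hw⟩, rfl⟩
  have hcomp : S13.prv C '' (S13.nxt C '' Vi) = Vi := by
    rw [← Set.image_comp]
    have hid : S13.prv C ∘ S13.nxt C = id := funext (S13.prv_nxt hnd hmem hlen)
    rw [hid, Set.image_id]
  have hc1 : Bp.ncard = Vi.ncard - ((S13.nxt C '' Vi) ∩ Vi).ncard := by
    rw [← Set.ncard_image_of_injective Bp hinj_nxt, him1, ← Set.diff_self_inter,
      Set.ncard_diff Set.inter_subset_left, Set.ncard_image_of_injective _ hinj_nxt]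
  have hc2 : Bm.ncard = Vi.ncard - ((S13.prv C '' Vi) ∩ Vi).ncard := by
    rw [← Set.ncard_image_of_injective Bm hinj_prv, him2, ← Set.diff_self_inter,
      Set.ncard_diff Set.inter_subset_left, Set.ncard_image_of_injective _ hinj_prv]
  have hc3 : ((S13.nxt C '' Vi) ∩ Vi).ncard = ((S13.prv C '' Vi) ∩ Vi).ncard := by
    calc ((S13.nxt C '' Vi) ∩ Vi).ncard
        = (S13.prv C '' ((S13.nxt C '' Vi) ∩ Vi)).ncard :=
          (Set.ncard_image_of_injective _ hinj_prv).symm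
      _ = ((S13.prv C '' (S13.nxt C '' Vi)) ∩ (S13.prv C '' Vi)).ncard := by
          rw [Set.image_inter hinj_prv]
      _ = (Vi ∩ (S13.prv C '' Vi)).ncard := by rw [hcomp]
      _ = ((S13.prv C '' Vi) ∩ Vi).ncard := by rw [Set.inter_comm]
  have hBpBm : Bp.ncard = Bm.ncard := by rw [hc1, hc2, hc3]
  -- cardinality of Ends
  have hdisj : Disjoint (Bp \ Bm) (Bm \ Bp) := by
    rw [Set.disjoint_left]
    rintro v ⟨h1, h2⟩ ⟨h3, h4⟩
    exact h2 h3
  have hE1 : Ends.ncard = (Bp \ Bm).ncard + (Bm \ Bp).ncard := by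
    rw [hEnds_eq, Set.ncard_union_eq hdisj]
  have hd1 : (Bp \ Bm).ncard = Bp.ncard - (Bp ∩ Bm).ncard := by
    rw [← Set.diff_self_inter, Set.ncard_diff Set.inter_subset_left]
  have hd2 : (Bm \ Bp).ncard = Bm.ncard - (Bp ∩ Bm).ncard := by
    rw [← Set.diff_self_inter, Set.ncard_diff Set.inter_subset_left, Set.inter_comm]
  have hle : (Bp ∩ Bm).ncard ≤ Bp.ncard :=
    Set.ncard_le_ncard Set.inter_subset_left (Set.toFinite _)
  -- the separator has 4 vertices
  have hScard : ((X i ∩ X j : Finset V) : Set V).ncard = 4 := by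
    rw [Set.ncard_coe_finset]
    have h4 := Finset.card_sdiff_add_card_inter (X i) (X j)
    have h5 := hsize i
    omega
  have hsubS : Ends ∪ Triv ⊆ ((X i ∩ X j : Finset V) : Set V) := by
    rw [hEnds_eq, hTriv_eq]
    rintro v (hv | hv)
    · rcases hv with ⟨h, _⟩ | ⟨h, _⟩
      · exact hBpS h
      · exact hBmS h
    · exact hBpS hv.1
  have hdisjET : Disjoint Ends Triv := by
    rw [hEnds_eq, hTriv_eq, Set.disjoint_left]
    rintro v (⟨h1, h2⟩ | ⟨h1, h2⟩) ⟨h3, h4⟩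
    · exact h2 h4
    · exact h2 h3
  have hsum : Ends.ncard + Triv.ncard ≤ 4 := by
    rw [← Set.ncard_union_eq hdisjET]
    rw [← hScard]
    exact Set.ncard_le_ncard hsubS (Set.toFinite _)
  -- Ends is nonempty
  obtain ⟨u, hu⟩ := Finset.card_pos.1 (show 0 < ((X i) \ (X j)).card by omega)
  rw [Finset.mem_sdiff] at hu
  obtain ⟨w0, hw0⟩ := Finset.card_pos.1 (show 0 < ((X j) \ (X i)).card by omega)
  rw [Finset.mem_sdiff] at hw0
  have huV : u ∈ Vi := (hViMem u).2 ⟨i, le_refl i, hu.1⟩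
  have hw0V : w0 ∉ Vi := by
    intro h
    obtain ⟨b, hb, hwb⟩ := (hViMem w0).1 h
    exact hw0.2 (hX.interval w0 b i j hb hij hwb hw0.1)
  have hnu : S13.nxt C u ∈ Vi := by
    by_contra h
    exact hu.2 (hcross u _ huV h ((hadjchar u _).2 (Or.inl rfl))).2
  have hpu : S13.prv C u ∈ Vi := by
    by_contra h
    exact hu.2 (hcross u _ huV h ((hadjchar u _).2 (Or.inr rfl))).2
  have hreach : ∃ t : ℕ, (S13.nxt C)^[t + 1] u ∉ Vi := by
    have hiu : C.idxOf u < C.length := S13.idx_lt hmem u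
    have hiw : C.idxOf w0 < C.length := S13.idx_lt hmem w0
    have hne : C.idxOf u ≠ C.idxOf w0 := by
      intro h
      apply hw0V
      have huw : u = w0 := by
        rw [← List.getElem_idxOf hiu, ← List.getElem_idxOf hiw]
        simp only [h]
      exact huw ▸ huV
    set t := (C.idxOf w0 + C.length - C.idxOf u) % C.length with ht
    have htpos : 0 < t := by
      rcases Nat.eq_zero_or_pos t with h0 | h0
      · exfalso
        rw [ht] at h0
        obtain ⟨c, hc⟩ := Nat.dvd_of_mod_eq_zero h0
        have hc2 : c < 2 := by
          by_contra hc2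
          have h2 := Nat.mul_le_mul_left C.length (not_lt.1 hc2)
          omega
        interval_cases c <;> omega
      · exact h0
    refine ⟨t - 1, ?_⟩
    have h1 : t - 1 + 1 = t := by omega
    rw [h1, S13.iterate_nxt hnd hmem hlen]
    have h2 : (C.idxOf u + t) % C.length = C.idxOf w0 := by
      rw [ht, Nat.add_mod_mod]
      have h3 : C.idxOf u + (C.idxOf w0 + C.length - C.idxOf u)
          = C.idxOf w0 + C.length := by omega
      rw [h3, Nat.add_mod_right]
      exact Nat.mod_eq_of_lt hiw
    rw [h2, List.getD_eq_getElem _ _ hiw, List.getElem_idxOf hiw]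
    exact hw0V
  set m := Nat.find hreach with hmdef
  have hm := Nat.find_spec hreach
  have hall : ∀ s, s ≤ m → (S13.nxt C)^[s] u ∈ Vi := by
    intro s hs
    cases s with
    | zero => exact huV
    | succ s' =>
      have := Nat.find_min hreach (show s' < m by omega)
      simpa using this
  set v := (S13.nxt C)^[m] u with hvdef
  have hvin : v ∈ Vi := hall m le_rfl
  have hvnxt : S13.nxt C v ∉ Vi := by
    rw [hvdef, ← Function.iterate_succ_apply' (S13.nxt C) m u]
    exact hm
  have hvprv : S13.prv C v ∈ Vi := by
    cases hmc : m with
    | zero =>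
      have : v = u := by rw [hvdef, hmc, Function.iterate_zero_apply]
      rw [this]; exact hpu
    | succ m' =>
      have hpv : S13.prv C v = (S13.nxt C)^[m'] u := by
        rw [hvdef, hmc, Function.iterate_succ_apply', S13.prv_nxt hnd hmem hlen]
      rw [hpv]
      exact hall m' (by omega)
  have hvE : v ∈ Ends := by
    rw [hEnds_eq]
    left
    refine ⟨⟨hvin, hvnxt⟩, fun h => ?_⟩
    exact h.2 hvprv
  have hEpos : 0 < Ends.ncard := (Set.ncard_pos (Set.toFinite _)).2 ⟨v, hvE⟩
  rw [hd1, hd2] at hE1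
  omega
end

section
/- Every outerplanar graph has at most one Hamiltonian cycle. -/
/-- The edge set of the cycle given (in cyclic order) by the list `l`. -/
def cycEdges {V : Type*} (l : List V) : Set (Sym2 V) :=
  {e | ∃ a b, e = s(a, b) ∧ ConsecIn (l ++ l.take 1) a b}

/-- `G` has `H` as a minor, witnessed by disjoint connected branch sets. -/
def HasMinor {V W : Type*} (G : SimpleGraph V) (H : SimpleGraph W) : Prop :=
  ∃ B : W → Set V,
    (∀ w, (G.induce (B w)).Connected) ∧
    (∀ w w', w ≠ w' → Disjoint (B w) (B w')) ∧
    (∀ w w', H.Adj w w' → ∃ a ∈ B w, ∃ b ∈ B w', G.Adj a b)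

/-- `G` is outerplanar: it has neither a `K₄` minor nor a `K_{2,3}` minor. -/
def Outerplanar {V : Type*} (G : SimpleGraph V) : Prop :=
  ¬ HasMinor G (SimpleGraph.completeGraph (Fin 4)) ∧
    ¬ HasMinor G (completeBipartiteGraph (Fin 2) (Fin 3))

section Core
variable {V : Type*} {G : SimpleGraph V} {n : ℕ} [NeZero n]

/-- The arc of vertices at offsets `[lo, hi)` from position `p`. -/
def arcSet (f : ZMod n → V) (p : ZMod n) (lo hi : ℕ) : Set V :=
  {w | ∃ t : ℕ, lo ≤ t ∧ t < hi ∧ w = f (p + (t : ZMod n))}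

lemma arc_mem (f : ZMod n → V) (p : ZMod n) {lo hi t : ℕ} (h1 : lo ≤ t) (h2 : t < hi) :
    f (p + (t : ZMod n)) ∈ arcSet f p lo hi := ⟨t, h1, h2, rfl⟩

lemma arc_conn (f : ZMod n → V) (p : ZMod n)
    (haf : ∀ k, G.Adj (f k) (f (k + 1))) {lo hi : ℕ} (h : lo < hi) :
    (G.induce (arcSet f p lo hi)).Connected := by
  rw [SimpleGraph.connected_iff]
  constructor
  · have key : ∀ (t : ℕ) (h1 : lo ≤ t) (h2 : t < hi),
        (G.induce (arcSet f p lo hi)).Reachable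
          ⟨f (p + (lo : ZMod n)), arc_mem f p le_rfl h⟩
          ⟨f (p + (t : ZMod n)), arc_mem f p h1 h2⟩ := by
      intro t h1
      induction t, h1 using Nat.le_induction with
      | base => intro _; exact SimpleGraph.Reachable.refl _
      | succ t ht ih =>
        intro hlt
        have ht' : t < hi := by omega
        refine (ih ht').trans ?_
        have hadj : (G.induce (arcSet f p lo hi)).Adj
            ⟨f (p + (t : ZMod n)), arc_mem f p ht ht'⟩
            ⟨f (p + ((t+1 : ℕ) : ZMod n)), arc_mem f p (by omega) hlt⟩ := by
          show G.Adj (f (p + (t : ZMod n))) (f (p + ((t+1 : ℕ) : ZMod n)))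
          have : p + ((t+1 : ℕ) : ZMod n) = (p + (t : ZMod n)) + 1 := by push_cast; ring
          rw [this]
          exact haf (p + (t : ZMod n))
        exact hadj.reachable
    rintro ⟨a, ⟨ta, h1, h2, rfl⟩⟩ ⟨b, ⟨tb, h1', h2', rfl⟩⟩
    exact (key ta h1 h2).symm.trans (key tb h1' h2')
  · exact ⟨⟨f (p + (lo : ZMod n)), arc_mem f p le_rfl h⟩⟩

lemma arc_disjoint {f : ZMod n → V} (hf : Function.Injective f) (p : ZMod n)
    {lo hi lo' hi' : ℕ} (h : hi ≤ lo') (h' : hi' ≤ n) :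
    Disjoint (arcSet f p lo hi) (arcSet f p lo' hi') := by
  rw [Set.disjoint_left]
  rintro w ⟨t, h1, h2, rfl⟩ ⟨t', h1', h2', he⟩
  have hfe := hf he
  have : (t : ZMod n) = (t' : ZMod n) := by
    have := congrArg (· - p) hfe; simpa using this
  have : t = t' := by
    have h3 := congrArg ZMod.val this
    rwa [ZMod.val_cast_of_lt (by omega), ZMod.val_cast_of_lt (by omega)] at h3
  omega
end Core

section Core2
variable {V : Type*} {G : SimpleGraph V}

lemma consec_adj {n : ℕ} [NeZero n] {f : ZMod n → V}
    (haf : ∀ k, G.Adj (f k) (f (k + 1))) (p : ZMod n) {a : ℕ} (ha : 1 ≤ a) :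
    G.Adj (f (p + ((a - 1 : ℕ) : ZMod n))) (f (p + (a : ZMod n))) := by
  have h := haf (p + ((a - 1 : ℕ) : ZMod n))
  have : p + ((a - 1 : ℕ) : ZMod n) + 1 = p + (a : ZMod n) := by
    rw [Nat.cast_sub ha]; push_cast; ring
  rwa [this] at h

lemma core_minor {n : ℕ} (hn : 3 ≤ n) (f g : ZMod n → V) (hf : Function.Bijective f)
    (hg : Function.Bijective g)
    (haf : ∀ k, G.Adj (f k) (f (k + 1))) (hag : ∀ k, G.Adj (g k) (g (k + 1)))
    (k : ZMod n)
    (hne : ∀ m : ZMod n, s(g k, g (k + 1)) ≠ s(f m, f (m + 1))) :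
    HasMinor G (SimpleGraph.completeGraph (Fin 4)) := by
  haveI : NeZero n := ⟨by omega⟩
  haveI : Fact (1 < n) := ⟨by omega⟩
  set x := g k with hx
  set y := g (k + 1) with hy
  have hxy : G.Adj x y := hag k
  obtain ⟨p, hp⟩ := hf.2 x
  obtain ⟨q, hq⟩ := hf.2 y
  set β := (q - p).val with hβdef
  have hvcast : ∀ a : ZMod n, ((a.val : ℕ) : ZMod n) = a :=
    fun a => ZMod.natCast_rightInverse a
  have hqp : q = p + (β : ZMod n) := by rw [hβdef, hvcast]; ring
  have hβn : β < n := ZMod.val_lt _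
  have hβ0 : β ≠ 0 := by
    intro h0
    have hqp' : q = p := by rw [hqp, h0]; push_cast; ring
    exact hxy.ne (by rw [← hp, ← hq, hqp'])
  have hβ1 : β ≠ 1 := by
    intro h1
    exact hne p (by rw [hp.symm, ← hq, hqp, h1]; push_cast; rfl)
  have hβtop : β ≠ n - 1 := by
    intro htop
    apply hne q
    have hq1 : q + 1 = p := by
      rw [hqp, htop, Nat.cast_sub (by omega : 1 ≤ n), ZMod.natCast_self]; ring
    rw [hq, hq1, hp]
    exact Sym2.eq_swap
  have hβ2 : 2 ≤ β := by omega
  have hβn2 : β ≤ n - 2 := by omega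
  set e := Equiv.ofBijective f hf with hedef
  set ov : V → ℕ := fun w => (e.symm w - p).val with hovdef
  have hov_lt : ∀ w, ov w < n := fun w => ZMod.val_lt _
  have hov_spec : ∀ w, f (p + ((ov w : ℕ) : ZMod n)) = w := by
    intro w
    rw [hovdef]; simp only []
    rw [hvcast]
    have : p + (e.symm w - p) = e.symm w := by ring
    rw [this]
    exact Equiv.ofBijective_apply_symm_apply f hf w
  have hov_f : ∀ t : ℕ, t < n → ov (f (p + (t : ZMod n))) = t := by
    intro t ht
    rw [hovdef]; simp only []
    have : e.symm (f (p + (t : ZMod n))) = p + (t : ZMod n) := by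
      apply e.injective; simp [hedef]
    rw [this]
    have : p + (t : ZMod n) - p = (t : ZMod n) := by ring
    rw [this, ZMod.val_cast_of_lt ht]
  have hov_x : ov x = 0 := by
    have h0 : f (p + ((0 : ℕ) : ZMod n)) = x := by simpa using hp
    rw [← h0]; exact hov_f 0 (by omega)
  have hov_y : ov y = β := by
    have h0 : f (p + ((β : ℕ) : ZMod n)) = y := by rw [← hqp]; exact hq
    rw [← h0]; exact hov_f β hβn
  have hov_inj : ∀ w w', ov w = ov w' → w = w' := by
    intro w w' h
    rw [← hov_spec w, ← hov_spec w', h]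
  -- find the crossing chord
  have main : ∃ u v, 0 < ov u ∧ ov u < β ∧ β < ov v ∧ G.Adj u v := by
    by_contra hcon
    push_neg at hcon
    set eg := Equiv.ofBijective g hg with hegdef
    have hgne : ∀ t : ℕ, 2 ≤ t → t < n →
        g (k + (t : ZMod n)) ≠ x ∧ g (k + (t : ZMod n)) ≠ y := by
      intro t h2 htn
      constructor
      · intro hgx
        have := hg.1 (hgx.trans hx)
        have h0 : (t : ZMod n) = 0 := by
          have := congrArg (· - k) this; simpa using this
        have := congrArg ZMod.val h0
        rw [ZMod.val_cast_of_lt htn, ZMod.val_zero] at this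
        omega
      · intro hgy
        have := hg.1 (hgy.trans hy)
        have h1 : (t : ZMod n) = 1 := by
          have := congrArg (· - k) this; simpa using this
        have := congrArg ZMod.val h1
        rw [ZMod.val_cast_of_lt htn, ZMod.val_one] at this
        omega
    have hclass : ∀ t : ℕ, 2 ≤ t → t < n →
        (0 < ov (g (k + (t : ZMod n))) ∧ ov (g (k + (t : ZMod n))) < β) ∨
          β < ov (g (k + (t : ZMod n))) := by
      intro t h2 htn
      obtain ⟨hnx, hny⟩ := hgne t h2 htn
      have h0 : ov (g (k + (t : ZMod n))) ≠ 0 := fun h =>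
        hnx (hov_inj _ _ (by rw [h, hov_x]))
      have hb : ov (g (k + (t : ZMod n))) ≠ β := fun h =>
        hny (hov_inj _ _ (by rw [h, hov_y]))
      omega
    have hstep : ∀ t : ℕ, 2 ≤ t → t + 1 < n →
        (ov (g (k + (t : ZMod n))) < β ↔ ov (g (k + ((t + 1 : ℕ) : ZMod n))) < β) := by
      intro t h2 ht1
      have hcast : k + ((t + 1 : ℕ) : ZMod n) = (k + (t : ZMod n)) + 1 := by
        push_cast; ring
      have hadj := hag (k + (t : ZMod n))
      rw [← hcast] at hadj
      rcases hclass t h2 (by omega) with h | h <;>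
        rcases hclass (t + 1) (by omega) ht1 with h' | h'
      · omega
      · exact absurd hadj (hcon _ _ h.1 h.2 h')
      · exact absurd hadj.symm (hcon _ _ h'.1 h'.2 h)
      · omega
    have hconst : ∀ t : ℕ, 2 ≤ t → t < n →
        (ov (g (k + (t : ZMod n))) < β ↔ ov (g (k + ((2 : ℕ) : ZMod n))) < β) := by
      intro t h2
      induction t, h2 using Nat.le_induction with
      | base => intro _; rfl
      | succ t h2 ih =>
        intro htn
        rw [← hstep t h2 htn]
        exact ih (by omega)
    -- the two witnesses
    have hpos : ∀ (w : V), w ≠ x → w ≠ y → ∃ t : ℕ, 2 ≤ t ∧ t < n ∧ g (k + (t : ZMod n)) = w := by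
      intro w hwx hwy
      refine ⟨(eg.symm w - k).val, ?_, ZMod.val_lt _, ?_⟩
      · rcases Nat.lt_or_ge (eg.symm w - k).val 2 with hlt | hge
        · exfalso
          interval_cases h : (eg.symm w - k).val
          · have : eg.symm w - k = 0 := by rw [← hvcast (eg.symm w - k), h]; simp
            have : eg.symm w = k := by rw [← sub_add_cancel (eg.symm w) k, this]; ring
            exact hwx (by rw [← Equiv.ofBijective_apply_symm_apply g hg w, ← hegdef, this, ← hx])
          · have : eg.symm w - k = 1 := by rw [← hvcast (eg.symm w - k), h]; simp
            have : eg.symm w = k + 1 := by rw [← sub_add_cancel (eg.symm w) k, this]; ring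
            exact hwy (by rw [← Equiv.ofBijective_apply_symm_apply g hg w, ← hegdef, this, ← hy])
        · exact hge
      · rw [hvcast]
        have : k + (eg.symm w - k) = eg.symm w := by ring
        rw [this]
        exact Equiv.ofBijective_apply_symm_apply g hg w
    set wA := f (p + ((1 : ℕ) : ZMod n)) with hwA
    set wB := f (p + ((β + 1 : ℕ) : ZMod n)) with hwB
    have hovA : ov wA = 1 := hov_f 1 (by omega)
    have hovB : ov wB = β + 1 := hov_f (β + 1) (by omega)
    obtain ⟨tA, htA2, htAn, htA⟩ := hpos wA
      (fun h => by rw [h, hov_x] at hovA; omega)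
      (fun h => by rw [h, hov_y] at hovA; omega)
    obtain ⟨tB, htB2, htBn, htB⟩ := hpos wB
      (fun h => by rw [h, hov_x] at hovB; omega)
      (fun h => by rw [h, hov_y] at hovB; omega)
    have h1 := hconst tA htA2 htAn
    have h2 := hconst tB htB2 htBn
    rw [htA, hovA] at h1
    rw [htB, hovB] at h2
    omega
  obtain ⟨u, v, hu0, huβ, hvβ, huv⟩ := main
  have hγn : ov v < n := hov_lt v
  have hfu : f (p + ((ov u : ℕ) : ZMod n)) = u := hov_spec u
  have hfv : f (p + ((ov v : ℕ) : ZMod n)) = v := hov_spec v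
  have hfy : f (p + ((β : ℕ) : ZMod n)) = y := by rw [← hqp]; exact hq
  -- the four branch sets
  refine ⟨![arcSet f p 0 (ov u), arcSet f p (ov u) β, arcSet f p β (ov v),
      arcSet f p (ov v) n], ?_, ?_, ?_⟩
  · intro w
    fin_cases w <;> exact arc_conn f p haf (by omega)
  · intro w w' hww
    fin_cases w <;> fin_cases w' <;>
      first
        | exact absurd rfl hww
        | exact arc_disjoint hf.1 p (by omega) (by omega)
        | exact (arc_disjoint hf.1 p (by omega) (by omega)).symm
  · have hmx : x ∈ arcSet f p 0 (ov u) := ⟨0, le_rfl, by omega, by simpa using hp.symm⟩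
    have hmu : u ∈ arcSet f p (ov u) β := ⟨ov u, le_rfl, huβ, hfu.symm⟩
    have hmy : y ∈ arcSet f p β (ov v) := ⟨β, le_rfl, by omega, hfy.symm⟩
    have hmv : v ∈ arcSet f p (ov v) n := ⟨ov v, le_rfl, hγn, hfv.symm⟩
    have e01 : ∃ a ∈ arcSet f p 0 (ov u), ∃ b ∈ arcSet f p (ov u) β, G.Adj a b :=
      ⟨f (p + ((ov u - 1 : ℕ) : ZMod n)), arc_mem f p (Nat.zero_le _) (by omega),
        f (p + ((ov u : ℕ) : ZMod n)), arc_mem f p le_rfl huβ, consec_adj haf p (by omega)⟩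
    have e12 : ∃ a ∈ arcSet f p (ov u) β, ∃ b ∈ arcSet f p β (ov v), G.Adj a b :=
      ⟨f (p + ((β - 1 : ℕ) : ZMod n)), arc_mem f p (by omega) (by omega),
        f (p + ((β : ℕ) : ZMod n)), arc_mem f p le_rfl (by omega), consec_adj haf p (by omega)⟩
    have e23 : ∃ a ∈ arcSet f p β (ov v), ∃ b ∈ arcSet f p (ov v) n, G.Adj a b :=
      ⟨f (p + ((ov v - 1 : ℕ) : ZMod n)), arc_mem f p (by omega) (by omega),
        f (p + ((ov v : ℕ) : ZMod n)), arc_mem f p le_rfl hγn, consec_adj haf p (by omega)⟩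
    have e30 : ∃ a ∈ arcSet f p (ov v) n, ∃ b ∈ arcSet f p 0 (ov u), G.Adj a b := by
      refine ⟨f (p + ((n - 1 : ℕ) : ZMod n)), arc_mem f p (by omega) (by omega), x, hmx, ?_⟩
      have h := consec_adj haf p (by omega : 1 ≤ n)
      rwa [show ((n : ℕ) : ZMod n) = 0 from ZMod.natCast_self n, add_zero, hp] at h
    have e02 : ∃ a ∈ arcSet f p 0 (ov u), ∃ b ∈ arcSet f p β (ov v), G.Adj a b :=
      ⟨x, hmx, y, hmy, hxy⟩
    have e13 : ∃ a ∈ arcSet f p (ov u) β, ∃ b ∈ arcSet f p (ov v) n, G.Adj a b :=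
      ⟨u, hmu, v, hmv, huv⟩
    have sym : ∀ {S T : Set V}, (∃ a ∈ S, ∃ b ∈ T, G.Adj a b) → ∃ a ∈ T, ∃ b ∈ S, G.Adj a b := by
      rintro S T ⟨a, ha, b, hb, hab⟩; exact ⟨b, hb, a, ha, hab.symm⟩
    intro w w' hww
    have hne' : w ≠ w' := hww
    fin_cases w <;> fin_cases w' <;>
      first
        | exact absurd rfl hne'
        | exact e01 | exact e12 | exact e23 | exact e30 | exact e02 | exact e13
        | exact sym e01 | exact sym e12 | exact sym e23 | exact sym e30
        | exact sym e02 | exact sym e13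
end Core2


lemma ham_to_fun {V : Type*} {G : SimpleGraph V} {l : List V} (h : IsHamCycle G l)
    (n : ℕ) (hlen : l.length = n) (hn3 : 3 ≤ n) :
    ∃ f : ZMod n → V, Function.Bijective f ∧ (∀ k, G.Adj (f k) (f (k + 1))) ∧
      cycEdges l = {e | ∃ k : ZMod n, e = s(f k, f (k + 1))} := by
  obtain ⟨hnd, hmem, hch, -, hcl⟩ := h
  subst hlen
  haveI : NeZero l.length := ⟨by omega⟩
  haveI : Fact (1 < l.length) := ⟨by omega⟩
  set n := l.length with hn
  have hl0 : l ≠ [] := by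
    rintro rfl; simp only [List.length_nil] at hn; omega
  have gcongr : ∀ {i j : ℕ} (hi : i < n) (_hj : j < n), i = j →
      l[i]'hi = l[j]'(by omega) := by
    rintro i j hi _ rfl; rfl
  refine ⟨fun k => l[k.val]'(ZMod.val_lt k), ⟨?_, ?_⟩, ?_, ?_⟩
  · intro a b hab
    exact ZMod.val_injective n ((hnd.getElem_inj_iff).1 hab)
  · intro v
    obtain ⟨i, hi, hiv⟩ := List.mem_iff_getElem.1 (hmem v)
    refine ⟨(i : ZMod n), ?_⟩
    show l[((i : ZMod n)).val]'(ZMod.val_lt _) = v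
    rw [gcongr (ZMod.val_lt _) hi (ZMod.val_cast_of_lt hi)]
    exact hiv
  · intro k
    by_cases hk : k.val + 1 < n
    · have hv : (k + 1).val = k.val + 1 := by
        rw [ZMod.val_add_of_lt (by rw [ZMod.val_one]; omega), ZMod.val_one]
      have hc := List.isChain_iff_getElem.1 hch k.val (by omega)
      show G.Adj (l[k.val]'(ZMod.val_lt k)) (l[(k + 1).val]'(ZMod.val_lt _))
      rw [gcongr (ZMod.val_lt _) (by omega) hv]
      exact hc
    · have hkv : k.val = n - 1 := by have := ZMod.val_lt k; omega
      have hv0 : (k + 1).val = 0 := by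
        rw [ZMod.val_add, ZMod.val_one, hkv, show n - 1 + 1 = n by omega, Nat.mod_self]
      show G.Adj (l[k.val]'(ZMod.val_lt k)) (l[(k + 1).val]'(ZMod.val_lt _))
      rw [gcongr (ZMod.val_lt _) (by omega) hkv, gcongr (ZMod.val_lt _) (by omega) hv0]
      have := (hcl hl0).symm
      rwa [List.getLast_eq_getElem, List.head_eq_getElem] at this
  · have hL : ∀ i : ℕ, (l ++ l.take 1)[i]? =
        if hi : i < n then some (l[i]'hi)
        else if i = n then some (l[0]'(by omega)) else none := by
      intro i
      by_cases hi : i < n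
      · rw [List.getElem?_append_left hi, List.getElem?_eq_getElem hi, dif_pos hi]
      · by_cases hieq : i = n
        · subst hieq
          rw [List.getElem?_append_right (le_refl _), dif_neg hi, if_pos rfl]
          simp only [Nat.sub_self]
          rw [List.getElem?_take_of_lt one_pos, List.getElem?_eq_getElem (by omega)]
        · rw [dif_neg hi, if_neg hieq, List.getElem?_eq_none]
          simp only [List.length_append, List.length_take]
          omega
    ext e
    simp only [cycEdges, ConsecIn, Set.mem_setOf_eq]
    constructor
    · rintro ⟨a, b, rfl, i, h1, h2⟩
      rw [hL] at h1 h2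
      by_cases hi1 : i + 1 < n
      · rw [dif_pos (by omega : i < n)] at h1
        rw [dif_pos hi1] at h2
        obtain rfl := Option.some.injEq .. ▸ h1.symm
        obtain rfl := Option.some.injEq .. ▸ h2.symm
        refine ⟨(i : ZMod n), ?_⟩
        have hk : ((i : ZMod n)).val = i := ZMod.val_cast_of_lt (by omega)
        have hk1 : ((i : ZMod n) + 1).val = i + 1 := by
          rw [ZMod.val_add_of_lt (by rw [hk, ZMod.val_one]; omega), hk, ZMod.val_one]
        rw [gcongr (ZMod.val_lt _) (by omega) hk, gcongr (ZMod.val_lt _) hi1 hk1]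
      · by_cases hieq : i + 1 = n
        · rw [dif_pos (by omega : i < n)] at h1
          rw [dif_neg (by omega), if_pos hieq] at h2
          obtain rfl := Option.some.injEq .. ▸ h1.symm
          obtain rfl := Option.some.injEq .. ▸ h2.symm
          refine ⟨((n - 1 : ℕ) : ZMod n), ?_⟩
          have hk : (((n - 1 : ℕ) : ZMod n)).val = n - 1 := ZMod.val_cast_of_lt (by omega)
          have hk1 : (((n - 1 : ℕ) : ZMod n) + 1).val = 0 := by
            rw [ZMod.val_add, hk, ZMod.val_one, show n - 1 + 1 = n by omega, Nat.mod_self]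
          rw [gcongr (ZMod.val_lt _) (by omega) hk, gcongr (ZMod.val_lt _) (by omega) hk1,
            gcongr (by omega) (by omega) (by omega : i = n - 1)]
        · rw [dif_neg (by omega), if_neg (by omega)] at h2
          exact absurd h2 (by simp)
    · rintro ⟨k, rfl⟩
      by_cases hk : k.val + 1 < n
      · have hk1 : (k + 1).val = k.val + 1 := by
          rw [ZMod.val_add_of_lt (by rw [ZMod.val_one]; omega), ZMod.val_one]
        refine ⟨_, _, rfl, k.val, ?_, ?_⟩
        · rw [hL, dif_pos (ZMod.val_lt k)]
        · rw [hL, dif_pos hk]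
          exact congrArg some (gcongr (ZMod.val_lt _) hk hk1).symm
      · have hkv : k.val = n - 1 := by have := ZMod.val_lt k; omega
        have hk1 : (k + 1).val = 0 := by
          rw [ZMod.val_add, ZMod.val_one, hkv, show n - 1 + 1 = n by omega, Nat.mod_self]
        refine ⟨_, _, rfl, k.val, ?_, ?_⟩
        · rw [hL, dif_pos (ZMod.val_lt k)]
        · rw [hL, dif_neg (by omega), if_pos (by omega)]
          exact congrArg some (gcongr (ZMod.val_lt _) (by omega) hk1).symm


/-- Every outerplanar graph has at most one Hamiltonian cycle (up to equality
of edge sets). -/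
theorem statement_15 {V : Type*} (G : SimpleGraph V) (hG : Outerplanar G)
    (l₁ l₂ : List V) (h1 : IsHamCycle G l₁) (h2 : IsHamCycle G l₂) :
    cycEdges l₁ = cycEdges l₂ := by
  have hn3 : 3 ≤ l₁.length := h1.2.2.2.1
  have hlen : l₂.length = l₁.length :=
    ((List.perm_ext_iff_of_nodup h2.1 h1.1).2
      (fun a => by simp [h1.2.1 a, h2.2.1 a])).length_eq
  obtain ⟨f, hf, haf, hcf⟩ := ham_to_fun h1 l₁.length rfl hn3
  obtain ⟨g, hg, hag, hcg⟩ := ham_to_fun h2 l₁.length hlen hn3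
  rw [hcf, hcg]
  ext e
  simp only [Set.mem_setOf_eq]
  constructor
  · rintro ⟨k, rfl⟩
    by_contra hcon
    push_neg at hcon
    exact hG.1 (core_minor hn3 g f hg hf hag haf k hcon)
  · rintro ⟨k, rfl⟩
    by_contra hcon
    push_neg at hcon
    exact hG.1 (core_minor hn3 f g hf hg haf hag k hcon)
end

section
/- For every n ≥ 1, the graph G_n with vertices {s, t, v_1, w_1, …, v_n, w_n} and edges making {s, t, v_1, w_1} a clique, {v_i, w_i, v_{i+1}, w_{i+1}} a clique for each 1 ≤ i < n (together with the edge v_n w_n), has at least 2^{n-1} distinct Hamiltonian cycles. -/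
/-- The graph `G_n` on the `2n + 2` vertices `s, t, v₁, w₁, …, vₙ, wₙ`
(in this order), consisting of the consecutive overlapping `4`-cliques
`{s, t, v₁, w₁}` and `{vᵢ, wᵢ, vᵢ₊₁, wᵢ₊₁}`: two vertices are adjacent iff
they lie in a common window `{2m, 2m+1, 2m+2, 2m+3}` for some `m < n`. -/
def chainGraph (n : ℕ) : SimpleGraph (Fin (2 * n + 2)) :=
  SimpleGraph.fromRel (fun a b => ∃ m : ℕ, m < n ∧
    2 * m ≤ (a : ℕ) ∧ (a : ℕ) ≤ 2 * m + 3 ∧ 2 * m ≤ (b : ℕ) ∧ (b : ℕ) ≤ 2 * m + 3)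

namespace Chain16

lemma toNat_le (b : Bool) : b.toNat ≤ 1 := by cases b <;> simp

def Fv (n : ℕ) (β : ℕ → Bool) (i : ℕ) : ℕ :=
  if i = 0 then 0 else if i = 1 then 1
  else if i ≤ n + 1 then 2 * i - 2 + (β (i - 2)).toNat
  else 2 * (2 * n + 1 - i) + 3 - (β (2 * n + 1 - i)).toNat

variable {n : ℕ}

lemma Fv_lt (hn : 1 ≤ n) (β : ℕ → Bool) (i : ℕ) : Fv n β i < 2 * n + 2 := by
  have h1 := toNat_le (β (i - 2)); have h2 := toNat_le (β (2 * n + 1 - i))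
  unfold Fv; split_ifs <;> omega

lemma Fv0 (β : ℕ → Bool) : Fv n β 0 = 0 := rfl
lemma Fv1 (β : ℕ → Bool) : Fv n β 1 = 1 := rfl

lemma Fv_up (β : ℕ → Bool) {i : ℕ} (h2 : 2 ≤ i) (hle : i ≤ n + 1) :
    Fv n β i = 2 * i - 2 + (β (i - 2)).toNat := by
  unfold Fv; rw [if_neg (by omega), if_neg (by omega), if_pos hle]

lemma Fv_dn (β : ℕ → Bool) {i : ℕ} (h : n + 2 ≤ i) :
    Fv n β i = 2 * (2 * n + 1 - i) + 3 - (β (2 * n + 1 - i)).toNat := by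
  unfold Fv; rw [if_neg (by omega), if_neg (by omega), if_neg (by omega)]

lemma Fv_inj (β : ℕ → Bool) {i j : ℕ} (hi : i ≤ 2 * n + 1) (hj : j ≤ 2 * n + 1)
    (h : Fv n β i = Fv n β j) : i = j := by
  have h1 := toNat_le (β (i - 2)); have h2 := toNat_le (β (2 * n + 1 - i))
  have h3 := toNat_le (β (j - 2)); have h4 := toNat_le (β (2 * n + 1 - j))
  unfold Fv at h
  split_ifs at h <;>
    first
      | omega
      | (first
          | (have hq : i - 2 = 2 * n + 1 - j := by omega
             rw [hq] at h; omega)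
          | (have hq : j - 2 = 2 * n + 1 - i := by omega
             rw [hq] at h; omega))

/-- The cycle as a function to `Fin (2n+2)`. -/
def gf (hn : 1 ≤ n) (β : ℕ → Bool) (i : ℕ) : Fin (2 * n + 2) := ⟨Fv n β i, Fv_lt hn β i⟩

/-- The Hamiltonian cycle list. -/
def L (hn : 1 ≤ n) (β : ℕ → Bool) : List (Fin (2 * n + 2)) :=
  (List.range (2 * n + 2)).map (gf hn β)

lemma adj (hn : 1 ≤ n) {a b : Fin (2 * n + 2)} (m : ℕ) (hm : m < n)
    (h1 : 2 * m ≤ (a : ℕ)) (h2 : (a : ℕ) ≤ 2 * m + 3) (h3 : 2 * m ≤ (b : ℕ))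
    (h4 : (b : ℕ) ≤ 2 * m + 3) (hne : (a : ℕ) ≠ (b : ℕ)) : (chainGraph n).Adj a b := by
  rw [chainGraph, SimpleGraph.fromRel_adj]
  exact ⟨fun h => hne (by rw [h]), Or.inl ⟨m, hm, h1, h2, h3, h4⟩⟩

lemma step_adj (hn : 1 ≤ n) (β : ℕ → Bool) {i : ℕ} (hi : i < 2 * n + 1) :
    (chainGraph n).Adj (gf hn β i) (gf hn β (i + 1)) := by
  have c1 : (gf hn β i : ℕ) = Fv n β i := rfl
  have c2 : (gf hn β (i + 1) : ℕ) = Fv n β (i + 1) := rfl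
  rcases Nat.lt_or_ge i 2 with h2 | h2
  · -- i = 0 or 1
    interval_cases i
    · have d1 : (gf hn β 0).val = 0 := rfl
      have d2 : (gf hn β (0 + 1)).val = 1 := rfl
      apply adj hn 0 hn <;> omega
    · have d1 : (gf hn β 1).val = 1 := rfl
      have d2 : (gf hn β (1 + 1)).val = 2 + (β 0).toNat := by
        show Fv n β 2 = _
        rw [Fv_up β (by norm_num) (by omega)]
      have := toNat_le (β 0)
      apply adj hn 0 hn <;> omega
  · rcases Nat.lt_or_ge i (n + 1) with h3 | h3
    · -- up-up : 2 ≤ i ≤ n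
      rw [Fv_up β h2 (by omega)] at c1
      rw [Fv_up β (by omega) (by omega)] at c2
      have t1 := toNat_le (β (i - 2)); have t2 := toNat_le (β (i + 1 - 2))
      apply adj hn (i - 1) (by omega) <;> omega
    · rcases Nat.lt_or_ge i (n + 2) with h4 | h4
      · -- i = n + 1 : the turn
        have hi' : i = n + 1 := by omega
        subst hi'
        rw [Fv_up β (by omega) (by omega)] at c1
        rw [Fv_dn β (by omega)] at c2
        have hq : 2 * n + 1 - (n + 1 + 1) = n + 1 - 2 := by omega
        rw [hq] at c2
        have t1 := toNat_le (β (n + 1 - 2))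
        apply adj hn (n - 1) (by omega) <;> omega
      · -- down-down : n + 2 ≤ i
        rw [Fv_dn β h4] at c1
        rw [Fv_dn β (by omega)] at c2
        have t1 := toNat_le (β (2 * n + 1 - i)); have t2 := toNat_le (β (2 * n + 1 - (i + 1)))
        apply adj hn (2 * n + 1 - i) (by omega) <;> omega

lemma L_length (hn : 1 ≤ n) (β : ℕ → Bool) : (L hn β).length = 2 * n + 2 := by
  simp [L]

lemma L_get (hn : 1 ≤ n) (β : ℕ → Bool) {i : ℕ} (h : i < 2 * n + 2) :
    (L hn β)[i]'(by rw [L_length]; exact h) = gf hn β i := by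
  simp [L]

lemma L_nodup (hn : 1 ≤ n) (β : ℕ → Bool) : (L hn β).Nodup := by
  apply List.Nodup.map_on _ List.nodup_range
  intro x hx y hy hxy
  rw [List.mem_range] at hx hy
  have : Fv n β x = Fv n β y := congrArg Fin.val hxy
  exact Fv_inj β (by omega) (by omega) this

lemma L_mem (hn : 1 ≤ n) (β : ℕ → Bool) (v : Fin (2 * n + 2)) : v ∈ L hn β := by
  have h1 : (L hn β).toFinset = Finset.univ := by
    apply Finset.eq_univ_of_card
    rw [List.toFinset_card_of_nodup (L_nodup hn β), L_length, Fintype.card_fin]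
  rw [← List.mem_toFinset, h1]
  exact Finset.mem_univ v

lemma L_chain (hn : 1 ≤ n) (β : ℕ → Bool) : (L hn β).Chain' (chainGraph n).Adj := by
  rw [List.Chain', List.isChain_iff_getElem]
  intro i h
  rw [L_length] at h
  have g1 : (L hn β).get ⟨i, by rw [L_length]; omega⟩ = gf hn β i := L_get hn β (by omega)
  have g2 : (L hn β).get ⟨i + 1, by rw [L_length]; omega⟩ = gf hn β (i + 1) :=
    L_get hn β (by omega)
  rw [List.get_eq_getElem] at g1 g2
  rw [g1, g2]
  exact step_adj hn β (by omega)

lemma L_ne_nil (hn : 1 ≤ n) (β : ℕ → Bool) : L hn β ≠ [] := by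
  intro h
  have := L_length hn β
  rw [h] at this
  simp at this

lemma L_headlast (hn : 1 ≤ n) (β : ℕ → Bool) (h : L hn β ≠ []) :
    (chainGraph n).Adj ((L hn β).head h) ((L hn β).getLast h) := by
  rw [List.head_eq_getElem, List.getLast_eq_getElem]
  have g1 : (L hn β)[0]'(by rw [L_length]; omega) = gf hn β 0 := L_get hn β (by omega)
  have g2 : (L hn β)[(L hn β).length - 1]'(by rw [L_length]; omega) = gf hn β (2 * n + 1) := by
    have := L_length hn β
    simp_rw [this]
    exact L_get hn β (by omega)
  rw [g1, g2]
  have c1 : (gf hn β 0 : ℕ) = 0 := rfl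
  have c2 : (gf hn β (2 * n + 1) : ℕ) = Fv n β (2 * n + 1) := rfl
  rw [Fv_dn β (by omega)] at c2
  have hq : 2 * n + 1 - (2 * n + 1) = 0 := by omega
  rw [hq] at c2
  have t1 := toNat_le (β 0)
  apply adj hn 0 hn
  case h1 => omega
  case h2 => omega
  case h3 => omega
  case h4 => omega
  case hne => omega

/-- Cyclic wrap-around version of `gf`. -/
def W (hn : 1 ≤ n) (β : ℕ → Bool) (i : ℕ) : Fin (2 * n + 2) :=
  if i = 2 * n + 2 then gf hn β 0 else gf hn β i

lemma L_get0 (hn : 1 ≤ n) (β : ℕ → Bool) : (L hn β)[0]? = some (gf hn β 0) := by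
  rw [L, List.getElem?_map, List.getElem?_range (by omega)]
  rfl

lemma take_one (hn : 1 ≤ n) (β : ℕ → Bool) : (L hn β).take 1 = [gf hn β 0] := by
  rcases hL : L hn β with _ | ⟨a, l⟩
  · exact absurd hL (L_ne_nil hn β)
  · have := L_get0 hn β
    rw [hL] at this
    simp only [List.getElem?_cons_zero, Option.some_inj] at this
    rw [this]
    rfl

lemma LL_get (hn : 1 ≤ n) (β : ℕ → Bool) (i : ℕ) :
    (L hn β ++ (L hn β).take 1)[i]? =
      if i ≤ 2 * n + 2 then some (W hn β i) else none := by
  rw [take_one, List.getElem?_append]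
  rw [L_length]
  by_cases h1 : i < 2 * n + 2
  · rw [if_pos h1, if_pos (by omega), W, if_neg (by omega), L]
    rw [List.getElem?_map, List.getElem?_range h1]
    rfl
  · rw [if_neg h1]
    by_cases h2 : i = 2 * n + 2
    · subst h2
      rw [if_pos (le_refl _), W, if_pos rfl]
      simp
    · rw [if_neg (by omega)]
      have : 1 ≤ i - (2 * n + 2) := by omega
      rw [List.getElem?_eq_none]
      simpa using this

lemma mem_cycE (hn : 1 ≤ n) (β : ℕ → Bool) (e : Sym2 (Fin (2 * n + 2))) :
    e ∈ cycEdges (L hn β) ↔ ∃ i ≤ 2 * n + 1, e = s(W hn β i, W hn β (i + 1)) := by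
  constructor
  · rintro ⟨a, b, rfl, i, h1, h2⟩
    rw [LL_get] at h1 h2
    by_cases hi : i ≤ 2 * n + 1
    · rw [if_pos (by omega)] at h1
      rw [if_pos (by omega)] at h2
      exact ⟨i, hi, by rw [Option.some_inj] at h1 h2; rw [h1, h2]⟩
    · rw [if_neg (by omega)] at h2
      exact absurd h2 (by simp)
  · rintro ⟨i, hi, rfl⟩
    exact ⟨_, _, rfl, i, by rw [LL_get, if_pos (by omega)], by rw [LL_get, if_pos (by omega)]⟩

lemma W_eq (hn : 1 ≤ n) (β : ℕ → Bool) {i : ℕ} (h : i ≠ 2 * n + 2) :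
    W hn β i = gf hn β i := if_neg h

lemma gf_val (hn : 1 ≤ n) (β : ℕ → Bool) (i : ℕ) : (gf hn β i).val = Fv n β i := rfl

/-- Key recursion: the edge sets determine the successive values. -/
lemma Fv_eq_of_cycE (hn : 1 ≤ n) {β β' : ℕ → Bool} (h0 : β 0 = false) (h0' : β' 0 = false)
    (hE : cycEdges (L hn β) = cycEdges (L hn β')) :
    ∀ j, j < n → Fv n β (j + 2) = Fv n β' (j + 2) := by
  intro j
  induction j with
  | zero =>
    intro _
    rw [show (0 : ℕ) + 2 = 2 from rfl, Fv_up β (by norm_num) (by omega),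
      Fv_up β' (by norm_num) (by omega)]
    norm_num [h0, h0']
  | succ j ih =>
    intro hj
    have ihv := ih (by omega)
    have hmem : s(gf hn β (j + 2), gf hn β (j + 3)) ∈ cycEdges (L hn β) := by
      rw [mem_cycE]
      refine ⟨j + 2, by omega, ?_⟩
      rw [W_eq hn β (by omega), W_eq hn β (by omega)]
    rw [hE, mem_cycE] at hmem
    obtain ⟨i, hi, he⟩ := hmem
    rw [W_eq hn β' (by omega)] at he
    rw [Sym2.eq_iff] at he
    have t1 := toNat_le (β (j + 2 - 2)); have t2 := toNat_le (β (j + 3 - 2))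
    have t3 := toNat_le (β' (j + 2 - 2))
    rcases he with ⟨ha, hb⟩ | ⟨ha, hb⟩
    · -- gf β (j+2) = gf β' i, gf β (j+3) = W β' (i+1)
      have hv : Fv n β' i = Fv n β' (j + 2) := by
        have := congrArg Fin.val ha
        rw [gf_val, gf_val] at this
        omega
      have hij : i = j + 2 := Fv_inj β' hi (by omega) hv
      subst hij
      have hW : W hn β' (j + 2 + 1) = gf hn β' (j + 3) := by
        rw [W_eq hn β' (by omega)]
      rw [hW] at hb
      have := congrArg Fin.val hb
      rw [gf_val, gf_val] at this
      rw [show j + 1 + 2 = j + 3 from rfl]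
      exact this
    · -- gf β (j+3) = gf β' i, gf β (j+2) = W β' (i+1)
      exfalso
      by_cases hc : i + 1 = 2 * n + 2
      · rw [hc, W, if_pos rfl] at ha
        have := congrArg Fin.val ha
        rw [gf_val, gf_val, Fv0] at this
        rw [Fv_up β (by omega) (by omega)] at this
        omega
      · rw [W_eq hn β' hc] at ha
        have hv : Fv n β' (i + 1) = Fv n β' (j + 2) := by
          have := congrArg Fin.val ha
          rw [gf_val, gf_val] at this
          omega
        have hij : i + 1 = j + 2 := Fv_inj β' (by omega) (by omega) hv
        have hij' : i = j + 1 := by omega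
        subst hij'
        have := congrArg Fin.val hb
        rw [gf_val, gf_val] at this
        rw [Fv_up β (by omega) (by omega)] at this
        rcases Nat.eq_zero_or_pos j with hj0 | hj0
        · subst hj0
          rw [show (0 : ℕ) + 1 = 1 from rfl, Fv1] at this
          omega
        · rw [Fv_up β' (by omega) (by omega)] at this
          have t4 := toNat_le (β' (j + 1 - 2))
          omega

lemma beta_eq_of_cycE (hn : 1 ≤ n) {β β' : ℕ → Bool} (h0 : β 0 = false) (h0' : β' 0 = false)
    (hE : cycEdges (L hn β) = cycEdges (L hn β')) :
    ∀ j, j < n → β j = β' j := by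
  intro j hj
  have h := Fv_eq_of_cycE hn h0 h0' hE j hj
  rw [Fv_up β (by omega) (by omega), Fv_up β' (by omega) (by omega)] at h
  have : j + 2 - 2 = j := by omega
  rw [this] at h
  have := toNat_le (β j); have := toNat_le (β' j)
  have hT : (β j).toNat = (β' j).toNat := by omega
  cases hβ : β j <;> cases hβ' : β' j <;> rw [hβ, hβ'] at hT <;> simp_all

end Chain16

/-- For every `n ≥ 1`, the graph `G_n` has at least `2 ^ (n - 1)` Hamiltonian
cycles with pairwise distinct edge sets. -/
theorem statement_16 (n : ℕ) (hn : 1 ≤ n) :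
    ∃ f : Fin (2 ^ (n - 1)) → List (Fin (2 * n + 2)),
      (∀ i, IsHamCycle (chainGraph n) (f i)) ∧
      Function.Injective (fun i => cycEdges (f i)) := by
  refine ⟨fun i => Chain16.L hn (fun j => if j = 0 then false else (i : ℕ).testBit (j - 1)),
    fun i => ⟨Chain16.L_nodup hn _, Chain16.L_mem hn _, Chain16.L_chain hn _,
      by rw [Chain16.L_length]; omega, Chain16.L_headlast hn _⟩, ?_⟩
  intro i i' h
  simp only at h
  have hb := Chain16.beta_eq_of_cycE hn (by simp) (by simp) h
  apply Fin.ext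
  apply Nat.eq_of_testBit_eq
  intro k
  by_cases hk : k + 1 < n
  · have hx := hb (k + 1) hk
    rw [if_neg (by omega), if_neg (by omega)] at hx
    exact hx
  · have b1 : (i : ℕ).testBit k = false :=
      Nat.testBit_lt_two_pow (lt_of_lt_of_le i.isLt (Nat.pow_le_pow_right (by norm_num) (by omega)))
    have b2 : (i' : ℕ).testBit k = false :=
      Nat.testBit_lt_two_pow (lt_of_lt_of_le i'.isLt (Nat.pow_le_pow_right (by norm_num) (by omega)))
    rw [b1, b2]
end

section
/- Let (T, {X_t}) be a rooted tree decomposition of a graph G in which every bag has exactly 4 vertices, join nodes have two children t_1, t_2 with X_t = X_{t_1} = X_{t_2}, exchange nodes have one child whose bag differs in exactly two vertices, and no leaf is the child of a join node. Let C be a Hamiltonian cycle of G, and for a node t let C_t be the maximal paths of C induced on V_t (the union of bags in the subtree at t). If t is a node whose parent is an exchange node, then C_t consists of exactly one non-trivial path together with at most one trivial (single-vertex) path. -/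
/-- A tree decomposition of `G` over a tree `T` with bags `X t`. -/
structure IsTreeDecomp {V ι : Type*} (G : SimpleGraph V) (T : SimpleGraph ι)
    (X : ι → Finset V) : Prop where
  isTree : T.IsTree
  covers : ∀ v, ∃ i, v ∈ X i
  covers_edge : ∀ ⦃u v⦄, G.Adj u v → ∃ i, u ∈ X i ∧ v ∈ X i
  subtree : ∀ v, (T.induce {i | v ∈ X i}).Connected

/-- In the tree `T` rooted at `r`, node `p` is the parent of node `c`. -/
def IsParent {ι : Type*} (T : SimpleGraph ι) (r p c : ι) : Prop :=
  T.Adj p c ∧ ∀ W : T.Walk r c, p ∈ W.support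

/-- In the tree `T` rooted at `r`, node `s` lies in the subtree rooted at `t`. -/
def InSubtree {ι : Type*} (T : SimpleGraph ι) (r t s : ι) : Prop :=
  ∀ W : T.Walk r s, t ∈ W.support

namespace CycHelp
variable {V : Type*} {C : List V}

def nsucc (n j : ℕ) : ℕ := if j + 1 = n then 0 else j + 1
def npred (n j : ℕ) : ℕ := if j = 0 then n - 1 else j - 1

lemma getL_lt (hn : 3 ≤ C.length) {k : ℕ} (hk : k < C.length) :
    (C ++ C.take 1)[k]? = some C[k] := by
  rw [List.getElem?_append_left hk, List.getElem?_eq_getElem hk]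

lemma getL_n (hn : 3 ≤ C.length) :
    (C ++ C.take 1)[C.length]? = some (C[0]'(by omega)) := by
  rw [List.getElem?_append_right (le_refl _)]
  simp only [Nat.sub_self]
  rw [List.getElem?_take, if_pos (by omega), List.getElem?_eq_getElem (by omega)]

lemma getL_none (hn : 3 ≤ C.length) {k : ℕ} (hk : C.length + 1 ≤ k) :
    (C ++ C.take 1)[k]? = none := by
  apply List.getElem?_eq_none
  simp only [List.length_append, List.length_take]
  omega

lemma occ (hnd : C.Nodup) (hn : 3 ≤ C.length) {k j : ℕ} (hj : j < C.length)
    (h : (C ++ C.take 1)[k]? = some C[j]) :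
    k = j ∨ (j = 0 ∧ k = C.length) := by
  rcases lt_trichotomy k C.length with hk | hk | hk
  · left
    rw [getL_lt hn hk] at h
    exact (List.Nodup.getElem_inj_iff hnd).mp (Option.some_injective _ h)
  · right
    subst hk
    rw [getL_n hn] at h
    have := (Option.some_injective _ h)
    exact ⟨(List.Nodup.getElem_inj_iff hnd).mp this.symm, rfl⟩
  · rw [getL_none hn (by omega)] at h
    simp at h

lemma gidx {i j : ℕ} (h : i = j) (hi : i < C.length) : C[i]'hi = C[j]'(h ▸ hi) := by
  subst h; rfl

lemma nsucc_lt {j : ℕ} (hn : 3 ≤ C.length) (hj : j < C.length) : nsucc C.length j < C.length := by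
  unfold nsucc; split <;> omega

lemma npred_lt {j : ℕ} (hn : 3 ≤ C.length) (hj : j < C.length) : npred C.length j < C.length := by
  unfold npred; split <;> omega

lemma getL_n' (hn : 3 ≤ C.length) {k : ℕ} (hk : k = C.length) :
    (C ++ C.take 1)[k]? = some (C[0]'(by omega)) := by
  subst hk; exact getL_n hn

lemma getL_succ (hnd : C.Nodup) (hn : 3 ≤ C.length) {j : ℕ} (hj : j < C.length) :
    (C ++ C.take 1)[j + 1]? = some (C[nsucc C.length j]'(nsucc_lt hn hj)) := by
  by_cases hcase : j + 1 = C.length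
  · rw [gidx (show nsucc C.length j = 0 by unfold nsucc; rw [if_pos hcase])]
    exact getL_n' hn hcase
  · rw [gidx (show nsucc C.length j = j + 1 by unfold nsucc; rw [if_neg hcase])]
    exact getL_lt hn (by omega)

lemma consec_right (hnd : C.Nodup) (hn : 3 ≤ C.length) {j : ℕ} (hj : j < C.length) {w : V} :
    ConsecIn (C ++ C.take 1) C[j] w ↔ w = C[nsucc C.length j]'(nsucc_lt hn hj) := by
  constructor
  · rintro ⟨k, h1, h2⟩
    rcases occ hnd hn hj h1 with rfl | ⟨rfl, rfl⟩
    · rw [getL_succ hnd hn hj] at h2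
      exact (Option.some_injective _ h2).symm
    · rw [getL_none hn (le_refl _)] at h2
      simp at h2
  · rintro rfl
    exact ⟨j, getL_lt hn hj, getL_succ hnd hn hj⟩

lemma succ_pred (hn : 3 ≤ C.length) {j : ℕ} (hj : j < C.length) :
    nsucc C.length (npred C.length j) = j := by
  unfold nsucc npred; split <;> split <;> omega

lemma pred_succ (hn : 3 ≤ C.length) {j : ℕ} (hj : j < C.length) :
    npred C.length (nsucc C.length j) = j := by
  unfold nsucc npred; split <;> split <;> omega

lemma consec_left (hnd : C.Nodup) (hn : 3 ≤ C.length) {j : ℕ} (hj : j < C.length) {w : V} :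
    ConsecIn (C ++ C.take 1) w C[j] ↔ w = C[npred C.length j]'(npred_lt hn hj) := by
  constructor
  · rintro ⟨k, h1, h2⟩
    have hkj : k = npred C.length j := by
      rcases occ hnd hn hj h2 with hk | ⟨hj0, hk⟩
      · unfold npred; rw [if_neg (by omega)]; omega
      · unfold npred; rw [if_pos hj0]; omega
    subst hkj
    rw [getL_lt hn (npred_lt hn hj)] at h1
    exact (Option.some_injective _ h1).symm
  · rintro rfl
    refine ⟨npred C.length j, getL_lt hn (npred_lt hn hj), ?_⟩
    rw [getL_succ hnd hn (npred_lt hn hj), gidx (succ_pred hn hj)]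

lemma cycleAdj_iff (hnd : C.Nodup) (hn : 3 ≤ C.length) {j : ℕ} (hj : j < C.length) {w : V} :
    CycleAdjIn C C[j] w ↔ (w = C[nsucc C.length j]'(nsucc_lt hn hj) ∨
      w = C[npred C.length j]'(npred_lt hn hj)) := by
  unfold CycleAdjIn
  rw [consec_right hnd hn hj, consec_left hnd hn hj]

lemma succ_ne_pred (hnd : C.Nodup) (hn : 3 ≤ C.length) {j : ℕ} (hj : j < C.length) :
    C[nsucc C.length j]'(nsucc_lt hn hj) ≠ C[npred C.length j]'(npred_lt hn hj) := by
  intro h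
  have := (List.Nodup.getElem_inj_iff hnd).mp h
  unfold nsucc npred at this
  split at this <;> split at this <;> omega

lemma cycleAdj_succ (hnd : C.Nodup) (hn : 3 ≤ C.length) {j : ℕ} (hj : j < C.length) :
    CycleAdjIn C C[j] (C[nsucc C.length j]'(nsucc_lt hn hj)) :=
  Or.inl ⟨j, getL_lt hn hj, getL_succ hnd hn hj⟩

lemma two_nbrs (hnd : C.Nodup) (hn : 3 ≤ C.length) {v : V} (hv : v ∈ C) :
    ∃ a b : V, a ≠ b ∧ ∀ w, CycleAdjIn C v w ↔ (w = a ∨ w = b) := by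
  obtain ⟨j, hj, rfl⟩ := List.mem_iff_getElem.mp hv
  exact ⟨_, _, succ_ne_pred hnd hn hj, fun w => cycleAdj_iff hnd hn hj⟩

lemma mod_succ_step (hn : 3 ≤ C.length) (a : ℕ) :
    nsucc C.length (a % C.length) = (a + 1) % C.length := by
  have h1 : a % C.length < C.length := Nat.mod_lt _ (by omega)
  unfold nsucc
  split
  · next h =>
      rw [Nat.add_mod a 1 C.length, Nat.mod_eq_of_lt (show 1 < C.length by omega), h,
        Nat.mod_self]
  · next h =>
      rw [Nat.add_mod a 1 C.length, Nat.mod_eq_of_lt (show 1 < C.length by omega),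
        Nat.mod_eq_of_lt (show a % C.length + 1 < C.length by omega)]

lemma closure (hnd : C.Nodup) (hn : 3 ≤ C.length) (hall : ∀ v, v ∈ C)
    (S : Set V) (hS : ∀ v ∈ S, ∀ w, CycleAdjIn C v w → w ∈ S)
    {v0 : V} (h0 : v0 ∈ S) : ∀ v : V, v ∈ S := by
  intro v
  obtain ⟨j0, hj0, hv0⟩ := List.mem_iff_getElem.mp (hall v0)
  obtain ⟨j, hj, hv⟩ := List.mem_iff_getElem.mp (hall v)
  have key : ∀ m : ℕ, C[(j0 + m) % C.length]'(Nat.mod_lt _ (by omega)) ∈ S := by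
    intro m
    induction m with
    | zero => simpa [Nat.mod_eq_of_lt hj0, hv0] using h0
    | succ m ih =>
      have hlt : (j0 + m) % C.length < C.length := Nat.mod_lt _ (by omega)
      have hadj := cycleAdj_succ hnd hn hlt
      have := hS _ ih _ hadj
      rwa [gidx (mod_succ_step hn (j0 + m)),
        gidx (show (j0 + m + 1) % C.length = (j0 + (m + 1)) % C.length by
          rw [Nat.add_assoc])] at this
  have := key (C.length + j - j0)
  rwa [gidx (show (j0 + (C.length + j - j0)) % C.length = j by
    rw [show j0 + (C.length + j - j0) = C.length + j by omega, Nat.add_mod_left,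
      Nat.mod_eq_of_lt hj]), hv] at this

open Classical in
lemma pair_ncard (S : Set V) {a b : V} (hab : a ≠ b) :
    {w | w ∈ S ∧ (w = a ∨ w = b)}.ncard =
      (if a ∈ S then 1 else 0) + (if b ∈ S then 1 else 0) := by
  by_cases ha : a ∈ S <;> by_cases hb : b ∈ S
  · have he : {w | w ∈ S ∧ (w = a ∨ w = b)} = {a, b} := by
      ext w
      constructor
      · rintro ⟨_, h⟩; exact h
      · rintro (rfl | rfl)
        exacts [⟨ha, Or.inl rfl⟩, ⟨hb, Or.inr rfl⟩]
    rw [he, Set.ncard_pair hab, if_pos ha, if_pos hb]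
  · have he : {w | w ∈ S ∧ (w = a ∨ w = b)} = {a} := by
      ext w
      constructor
      · rintro ⟨hw, (rfl | rfl)⟩
        · rfl
        · exact absurd hw hb
      · rintro rfl; exact ⟨ha, Or.inl rfl⟩
    rw [he, Set.ncard_singleton, if_pos ha, if_neg hb]
  · have he : {w | w ∈ S ∧ (w = a ∨ w = b)} = {b} := by
      ext w
      constructor
      · rintro ⟨hw, (rfl | rfl)⟩
        · exact absurd hw ha
        · rfl
      · rintro rfl; exact ⟨hb, Or.inr rfl⟩
    rw [he, Set.ncard_singleton, if_neg ha, if_pos hb]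
  · have he : {w | w ∈ S ∧ (w = a ∨ w = b)} = ∅ := by
      ext w
      simp only [Set.mem_setOf_eq, Set.mem_empty_iff_false, iff_false]
      rintro ⟨hw, (rfl | rfl)⟩
      exacts [ha hw, hb hw]
    rw [he, Set.ncard_empty, if_neg ha, if_neg hb]

open Classical in
lemma even_deg_one (hnd : C.Nodup) (hn : 3 ≤ C.length) (hall : ∀ v, v ∈ C) (S : Set V) :
    Even {v | v ∈ S ∧ {w | w ∈ S ∧ CycleAdjIn C v w}.ncard = 1}.ncard := by
  set n := C.length with hn'
  let χ : Fin n → ℕ := fun j => if C.get j ∈ S then 1 else 0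
  let succF : Fin n → Fin n := fun j => ⟨nsucc n j, nsucc_lt hn j.isLt⟩
  let predF : Fin n → Fin n := fun j => ⟨npred n j, npred_lt hn j.isLt⟩
  have hd : ∀ j : Fin n, {w | w ∈ S ∧ CycleAdjIn C (C.get j) w}.ncard
      = χ (succF j) + χ (predF j) := by
    intro j
    have h1 : {w | w ∈ S ∧ CycleAdjIn C (C.get j) w}
        = {w | w ∈ S ∧ (w = C[nsucc n j]'(nsucc_lt hn j.isLt)
            ∨ w = C[npred n j]'(npred_lt hn j.isLt))} := by
      ext w
      rw [Set.mem_setOf_eq, Set.mem_setOf_eq, List.get_eq_getElem,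
        cycleAdj_iff hnd hn j.isLt]
    rw [h1, pair_ncard S (succ_ne_pred hnd hn j.isLt)]
    simp only [χ, succF, predF, List.get_eq_getElem]
    rfl
  let P : Fin n → Prop := fun j => χ j = 1 ∧ χ (succF j) + χ (predF j) = 1
  have hA : {v | v ∈ S ∧ {w | w ∈ S ∧ CycleAdjIn C v w}.ncard = 1}
      = C.get '' {j | P j} := by
    ext v
    simp only [Set.mem_setOf_eq, Set.mem_image]
    constructor
    · rintro ⟨hvS, hd1⟩
      obtain ⟨j, hj, hvj⟩ := List.mem_iff_getElem.mp (hall v)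
      refine ⟨⟨j, hj⟩, ⟨?_, ?_⟩, hvj⟩
      · have hm : C[j] ∈ S := by rw [hvj]; exact hvS
        simp only [χ, List.get_eq_getElem]
        rw [if_pos hm]
      · rw [← hd ⟨j, hj⟩]
        simp only [List.get_eq_getElem]
        rw [hvj]
        exact hd1
    · rintro ⟨j, ⟨hχ, hc⟩, rfl⟩
      refine ⟨?_, by rw [hd j]; exact hc⟩
      by_contra hvS
      simp only [χ, if_neg hvS] at hχ
      omega
  have hinj : Function.Injective C.get := fun a b hab =>
    Fin.ext ((List.Nodup.getElem_inj_iff hnd).mp (by simpa using hab))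
  rw [hA, Set.ncard_image_of_injective _ hinj]
  have hT : {j | P j} = ↑(Finset.univ.filter P) := by
    ext j; simp
  rw [hT, Set.ncard_coe_finset]
  -- parity of the filtered card via the handshake sum
  let f : Fin n → ℕ := fun j => χ j * (χ (succF j) + χ (predF j))
  have hsum_even : Even (∑ j, f j) := by
    have h2 : ∑ j, f j = ∑ j, χ j * χ (succF j) + ∑ j, χ j * χ (predF j) := by
      rw [← Finset.sum_add_distrib]
      exact Finset.sum_congr rfl fun j _ => by simp [f, mul_add]
    have h3 : ∑ j, χ j * χ (predF j) = ∑ j, χ (succF j) * χ (predF (succF j)) :=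
      (Equiv.sum_comp (⟨succF, predF, fun j => Fin.ext (pred_succ hn j.isLt),
        fun j => Fin.ext (succ_pred hn j.isLt)⟩ : Fin n ≃ Fin n)
        (fun j => χ j * χ (predF j))).symm
    have h4 : ∀ j : Fin n, χ (succF j) * χ (predF (succF j)) = χ j * χ (succF j) := by
      intro j
      have hps : predF (succF j) = j := Fin.ext (pred_succ hn j.isLt)
      rw [hps, mul_comm]
    rw [h2, h3, Finset.sum_congr rfl fun j _ => h4 j]
    exact ⟨∑ j, χ j * χ (succF j), rfl⟩
  have hsplit := Finset.sum_filter_add_sum_filter_not Finset.univ P f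
  have hone : ∑ j ∈ Finset.univ.filter P, f j = (Finset.univ.filter P).card := by
    rw [Finset.card_eq_sum_ones]
    refine Finset.sum_congr rfl fun j hj => ?_
    obtain ⟨h1, h2⟩ := (Finset.mem_filter.mp hj).2
    simp [f, h1, h2]
  have heven2 : Even (∑ j ∈ Finset.univ.filter (fun j => ¬ P j), f j) := by
    refine Finset.even_sum _ fun j hj => ?_
    have hnP := (Finset.mem_filter.mp hj).2
    by_cases hχ : χ j = 1
    · have hc : χ (succF j) + χ (predF j) ≠ 1 := fun hc => hnP ⟨hχ, hc⟩
      have hb1 : χ (succF j) ≤ 1 := by simp only [χ]; split <;> omega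
      have hb2 : χ (predF j) ≤ 1 := by simp only [χ]; split <;> omega
      have hor : χ (succF j) + χ (predF j) = 0 ∨ χ (succF j) + χ (predF j) = 2 := by omega
      rcases hor with h | h
      · simp [f, hχ, h]
      · simp only [f, hχ, h, one_mul]
        exact even_two
    · by_cases hm : C.get j ∈ S
      · exact absurd (by simp only [χ, if_pos hm]) hχ
      · simp only [f, χ, if_neg hm, zero_mul]
        exact Even.zero
  have : Even ((Finset.univ.filter P).card + ∑ j ∈ Finset.univ.filter (fun j => ¬ P j), f j) := by
    rw [← hone, hsplit]
    exact hsum_even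
  rw [Nat.even_add] at this
  exact this.mpr heven2

lemma cycleAdj_symm {a b : V} (h : CycleAdjIn C a b) : CycleAdjIn C b a := h.symm

lemma consec_imp_adj {G : SimpleGraph V} (hC : IsHamCycle G C) {a b : V}
    (h : ConsecIn (C ++ C.take 1) a b) : G.Adj a b := by
  obtain ⟨hnd, hall, hch, hn, hwrap⟩ := hC
  obtain ⟨i, h1, h2⟩ := h
  have hne : C ≠ [] := by intro h; rw [h] at hn; simp at hn
  have hi1 : i + 1 ≤ C.length := by
    by_contra hcon
    rw [getL_none hn (by omega)] at h2
    simp at h2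
  by_cases hcase : i + 1 = C.length
  · rw [show i = C.length - 1 by omega, getL_lt hn (by omega)] at h1
    rw [hcase, getL_n hn] at h2
    obtain rfl := (Option.some_injective _ h1).symm
    obtain rfl := (Option.some_injective _ h2).symm
    have := hwrap hne
    rw [List.head_eq_getElem_zero hne, List.getLast_eq_getElem] at this
    exact this.symm
  · rw [getL_lt hn (by omega)] at h1
    rw [getL_lt hn (by omega)] at h2
    obtain rfl := (Option.some_injective _ h1).symm
    obtain rfl := (Option.some_injective _ h2).symm
    have := List.isChain_iff_getElem.mp hch (i) (by omega)
    simpa using this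

lemma cycleAdj_imp_adj {G : SimpleGraph V} (hC : IsHamCycle G C) {a b : V}
    (h : CycleAdjIn C a b) : G.Adj a b := by
  rcases h with h | h
  · exact consec_imp_adj hC h
  · exact (consec_imp_adj hC h).symm

end CycHelp

namespace TreeHelp
open SimpleGraph
variable {V ι : Type*} {G : SimpleGraph V} {T : SimpleGraph ι} {X : ι → Finset V} {r t p : ι}

lemma walk_cross {s' s : ι} (hs' : InSubtree T r t s') (hs : ¬ InSubtree T r t s)
    (W : T.Walk s' s) : t ∈ W.support := by
  rw [InSubtree] at hs
  push_neg at hs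
  obtain ⟨W0, hW0⟩ := hs
  by_contra ht
  have := hs' (W0.append W.reverse)
  rw [SimpleGraph.Walk.mem_support_append_iff] at this
  rcases this with h | h
  · exact hW0 h
  · rw [SimpleGraph.Walk.support_reverse, List.mem_reverse] at h
    exact ht h

lemma bag_walk (htd : IsTreeDecomp G T X) {v : V} {s' s : ι} (h1 : v ∈ X s') (h2 : v ∈ X s) :
    ∃ W : T.Walk s' s, ∀ x ∈ W.support, v ∈ X x := by
  have hreach := (htd.subtree v).preconnected ⟨s', h1⟩ ⟨s, h2⟩
  obtain ⟨W⟩ := hreach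
  refine ⟨W.map (SimpleGraph.Embedding.induce {i | v ∈ X i}).toHom, ?_⟩
  intro x hx
  change x ∈ (W.map (SimpleGraph.Embedding.induce {i | v ∈ X i}).toHom).support at hx
  rw [SimpleGraph.Walk.support_map, List.mem_map] at hx
  obtain ⟨⟨y, hy⟩, _, rfl⟩ := hx
  exact hy

lemma bag_mem_root (htd : IsTreeDecomp G T X) {v : V} {s' s : ι}
    (hs' : InSubtree T r t s') (hs : ¬ InSubtree T r t s)
    (h1 : v ∈ X s') (h2 : v ∈ X s) : v ∈ X t := by
  obtain ⟨W, hW⟩ := bag_walk htd h1 h2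
  exact hW t (walk_cross hs' hs W)

lemma self_inSubtree : InSubtree T r t t := fun W => W.end_mem_support

lemma parent_not_inSubtree (htd : IsTreeDecomp G T X) (hp : IsParent T r p t) :
    ¬ InSubtree T r t p := by
  classical
  intro hcon
  have hconn := htd.isTree.isConnected
  obtain ⟨Q⟩ := hconn.preconnected r t
  set P : T.Walk r t := (Q.toPath : T.Path r t).val with hP
  have hPpath : P.IsPath := (Q.toPath).2
  have hpP : p ∈ P.support := hp.2 P
  have hpt : p ≠ t := hp.1.ne
  have ht : t ∈ (P.takeUntil p hpP).support := hcon (P.takeUntil p hpP)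
  have hspec := P.take_spec hpP
  have hnd : P.support.Nodup := hPpath.support_nodup
  rw [← hspec, SimpleGraph.Walk.support_append, List.nodup_append] at hnd
  have ht2 : t ∈ (P.dropUntil p hpP).support.tail := by
    have := (P.dropUntil p hpP).end_mem_support
    rw [SimpleGraph.Walk.support_eq_cons] at this
    rcases List.mem_cons.mp this with h | h
    · exact absurd h.symm hpt
    · exact h
  exact hnd.2.2 t ht t ht2 rfl

lemma interior_subtree (htd : IsTreeDecomp G T X) (hp : IsParent T r p t) {v : V}
    (hvt : v ∈ X t) (hvp : v ∉ X p) {s : ι} (hvs : v ∈ X s) : InSubtree T r t s := by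
  classical
  intro W
  by_contra htW
  obtain ⟨Q, hQ⟩ := bag_walk htd hvt hvs
  have hpQ : p ∉ Q.support := fun h => hvp (hQ p h)
  set P : T.Walk r s := (W.toPath : T.Path r s).val with hPdef
  have hPpath : P.IsPath := (W.toPath).2
  have htP : t ∉ P.support := fun h => htW (W.support_toPath_subset h)
  have hpP : p ∈ P.support := by
    have := hp.2 (P.append Q.reverse)
    rw [SimpleGraph.Walk.mem_support_append_iff] at this
    rcases this with h | h
    · exact h
    · rw [SimpleGraph.Walk.support_reverse, List.mem_reverse] at h
      exact absurd h hpQ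
  set P2 : T.Walk p s := P.dropUntil p hpP with hP2def
  have htP2 : t ∉ P2.support := fun h => htP (P.support_dropUntil_subset hpP h)
  set R : T.Walk p t := P2.append Q.reverse with hRdef
  have hedge : s(p, t) ∉ R.edges := by
    rw [hRdef, SimpleGraph.Walk.edges_append, List.mem_append]
    rintro (h | h)
    · exact htP2 (P2.snd_mem_support_of_mem_edges h)
    · rw [SimpleGraph.Walk.edges_reverse, List.mem_reverse] at h
      exact hpQ (Q.fst_mem_support_of_mem_edges h)
  have huniq := htd.isTree.existsUnique_path p t
  have h1 : (R.toPath : T.Walk p t) = (SimpleGraph.Path.singleton hp.1 : T.Walk p t) := by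
    have ha := huniq.unique (R.toPath).2 (SimpleGraph.Path.singleton hp.1).2
    exact ha
  have h2 : s(p, t) ∈ (R.toPath : T.Walk p t).edges := by
    rw [h1]
    simp [SimpleGraph.Path.singleton]
  exact hedge (R.edges_toPath_subset h2)

lemma endpoint_bag (htd : IsTreeDecomp G T X) {v w : V} {s' : ι}
    (hs' : InSubtree T r t s') (hv : v ∈ X s') (hadj : G.Adj v w)
    (hw : ∀ s, InSubtree T r t s → w ∉ X s) : v ∈ X t := by
  obtain ⟨s, hvs, hws⟩ := htd.covers_edge hadj
  exact bag_mem_root htd hs' (fun h => hw s h hws) hv hvs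

lemma parentbag_not_in (htd : IsTreeDecomp G T X) (hp : IsParent T r p t) {u : V}
    (hup : u ∈ X p) (hut : u ∉ X t) : ∀ s, InSubtree T r t s → u ∉ X s := by
  intro s hs hus
  exact hut (bag_mem_root htd hs (parent_not_inSubtree htd hp) hus hup)

lemma interior_closed (htd : IsTreeDecomp G T X) (hp : IsParent T r p t) {v : V}
    (hvt : v ∈ X t) (hvp : v ∉ X p) {w : V} (hadj : G.Adj v w) :
    ∃ s, InSubtree T r t s ∧ w ∈ X s := by
  obtain ⟨s, hvs, hws⟩ := htd.covers_edge hadj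
  exact ⟨s, interior_subtree htd hp hvt hvp hvs, hws⟩

end TreeHelp

/-- Rooted tree decomposition, all bags of size `4`, join nodes (two children)
repeat their bag in both children, exchange nodes (unique child) differ from
their child's bag in exactly two vertices, and no leaf is the child of a join
node. If the parent `p` of `t` is an exchange node, then the restriction of a
Hamiltonian cycle `C` to `V_t` consists of exactly one non-trivial path (two
vertices of `V_t` with exactly one cycle-neighbor in `V_t`) together with at
most one trivial path (vertex of `V_t` with no cycle-neighbor in `V_t`). -/
theorem statement_17 {V ι : Type*} [DecidableEq V] (G : SimpleGraph V)
    (T : SimpleGraph ι) (X : ι → Finset V) (r : ι)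
    (htd : IsTreeDecomp G T X)
    (hsize : ∀ s, (X s).card = 4)
    (hjoin : ∀ s c₁ c₂, IsParent T r s c₁ → IsParent T r s c₂ → c₁ ≠ c₂ →
      X c₁ = X s ∧ X c₂ = X s)
    (hexch : ∀ s c, IsParent T r s c → (∀ c', IsParent T r s c' → c' = c) →
      ((X s) \ (X c)).card = 1 ∧ ((X c) \ (X s)).card = 1)
    (hleaf : ∀ s c₁ c₂ c, IsParent T r s c₁ → IsParent T r s c₂ → c₁ ≠ c₂ →
      IsParent T r s c → ∃ c', IsParent T r c c')
    (C : List V) (hC : IsHamCycle G C)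
    (t p : ι) (hp : IsParent T r p t)
    (hponechild : ∀ c, IsParent T r p c → c = t)
    (Vt : Set V) (hVt : Vt = {v | ∃ s, InSubtree T r t s ∧ v ∈ X s}) :
    {v | v ∈ Vt ∧ {w | w ∈ Vt ∧ CycleAdjIn C v w}.ncard = 1}.ncard = 2 ∧
      {v | v ∈ Vt ∧ ∀ w, CycleAdjIn C v w → w ∉ Vt}.ncard ≤ 1 := by
  classical
  obtain ⟨hnd, hall, hch, hlen, hwrap⟩ := id hC
  -- the two special vertices of the exchange node
  obtain ⟨hcard1, hcard2⟩ := hexch p t hp hponechild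
  obtain ⟨u, hu⟩ := Finset.card_eq_one.mp hcard1
  obtain ⟨vs, hvs⟩ := Finset.card_eq_one.mp hcard2
  have humem : u ∈ X p \ X t := hu ▸ Finset.mem_singleton_self u
  have hvsmem : vs ∈ X t \ X p := hvs ▸ Finset.mem_singleton_self vs
  obtain ⟨hup, hut⟩ := Finset.mem_sdiff.mp humem
  obtain ⟨hvst, hvsp⟩ := Finset.mem_sdiff.mp hvsmem
  -- u is not in Vt
  have huVt : u ∉ Vt := by
    rw [hVt]
    rintro ⟨s, hs, hus⟩
    exact TreeHelp.parentbag_not_in htd hp hup hut s hs hus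
  -- vs is in Vt and all its cycle neighbours are in Vt
  have hvsVt : vs ∈ Vt := by
    rw [hVt]; exact ⟨t, TreeHelp.self_inSubtree, hvst⟩
  have hvs_closed : ∀ w, CycleAdjIn C vs w → w ∈ Vt := by
    intro w hw
    obtain ⟨s, hs, hws⟩ :=
      TreeHelp.interior_closed htd hp hvst hvsp (CycHelp.cycleAdj_imp_adj hC hw)
    rw [hVt]; exact ⟨s, hs, hws⟩
  -- a vertex of Vt with a cycle neighbour outside Vt lies in X t
  have hend : ∀ v ∈ Vt, ∀ w, CycleAdjIn C v w → w ∉ Vt → v ∈ X t := by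
    intro v hv w hw hwVt
    rw [hVt] at hv hwVt
    obtain ⟨s', hs', hvX⟩ := hv
    exact TreeHelp.endpoint_bag htd hs' hvX (CycHelp.cycleAdj_imp_adj hC hw)
      (fun s hs hws => hwVt ⟨s, hs, hws⟩)
  set A := {v | v ∈ Vt ∧ {w | w ∈ Vt ∧ CycleAdjIn C v w}.ncard = 1} with hA
  set B := {v | v ∈ Vt ∧ ∀ w, CycleAdjIn C v w → w ∉ Vt} with hB
  -- degree of vs is two
  have hvs_deg : {w | w ∈ Vt ∧ CycleAdjIn C vs w}.ncard = 2 := by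
    obtain ⟨a, b, hab, hiff⟩ := CycHelp.two_nbrs hnd hlen (hall vs)
    have hseq : {w | w ∈ Vt ∧ CycleAdjIn C vs w} = {w | w ∈ Vt ∧ (w = a ∨ w = b)} := by
      ext w; rw [Set.mem_setOf_eq, Set.mem_setOf_eq, hiff w]
    have haVt : a ∈ Vt := hvs_closed a ((hiff a).mpr (Or.inl rfl))
    have hbVt : b ∈ Vt := hvs_closed b ((hiff b).mpr (Or.inr rfl))
    rw [hseq, CycHelp.pair_ncard Vt hab, if_pos haVt, if_pos hbVt]
  have hvsA : vs ∉ A := by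
    rintro ⟨-, h2⟩
    rw [hvs_deg] at h2
    omega
  have hvsB : vs ∉ B := by
    obtain ⟨a, b, hab, hiff⟩ := CycHelp.two_nbrs hnd hlen (hall vs)
    rintro ⟨-, h2⟩
    exact h2 a ((hiff a).mpr (Or.inl rfl)) (hvs_closed a ((hiff a).mpr (Or.inl rfl)))
  -- A and B are contained in X t minus vs
  have hAsub : A ⊆ ↑((X t).erase vs) := by
    rintro v ⟨hv1, hv2⟩
    rw [Finset.coe_erase, Set.mem_diff, Set.mem_singleton_iff]
    refine ⟨?_, fun h => hvsA (h ▸ (⟨hv1, hv2⟩ : v ∈ A))⟩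
    obtain ⟨a, b, hab, hiff⟩ := CycHelp.two_nbrs hnd hlen (hall v)
    by_cases ha : a ∈ Vt
    · by_cases hb : b ∈ Vt
      · exfalso
        have hseq : {w | w ∈ Vt ∧ CycleAdjIn C v w} = {w | w ∈ Vt ∧ (w = a ∨ w = b)} := by
          ext w; rw [Set.mem_setOf_eq, Set.mem_setOf_eq, hiff w]
        rw [hseq, CycHelp.pair_ncard Vt hab, if_pos ha, if_pos hb] at hv2
        omega
      · exact hend v hv1 b ((hiff b).mpr (Or.inr rfl)) hb
    · exact hend v hv1 a ((hiff a).mpr (Or.inl rfl)) ha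
  have hBsub : B ⊆ ↑((X t).erase vs) := by
    rintro v ⟨hv1, hv2⟩
    rw [Finset.coe_erase, Set.mem_diff, Set.mem_singleton_iff]
    refine ⟨?_, fun h => hvsB (h ▸ (⟨hv1, hv2⟩ : v ∈ B))⟩
    obtain ⟨a, b, hab, hiff⟩ := CycHelp.two_nbrs hnd hlen (hall v)
    exact hend v hv1 a ((hiff a).mpr (Or.inl rfl))
      (hv2 a ((hiff a).mpr (Or.inl rfl)))
  have hdisj : Disjoint A B := by
    rw [Set.disjoint_left]
    rintro v ⟨hv1, hv2⟩ ⟨-, hv3⟩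
    have hne : {w | w ∈ Vt ∧ CycleAdjIn C v w}.Nonempty :=
      Set.nonempty_of_ncard_ne_zero (by rw [hv2]; omega)
    obtain ⟨w, hw1, hw2⟩ := hne
    exact hv3 w hw2 hw1
  -- A is nonempty
  have hAne : A.Nonempty := by
    rw [Set.nonempty_iff_ne_empty]
    intro hAe
    set S := {v | v ∈ Vt ∧ ∀ w, CycleAdjIn C v w → w ∈ Vt} with hS
    have hScl : ∀ v ∈ S, ∀ w, CycleAdjIn C v w → w ∈ S := by
      rintro v ⟨hv1, hv2⟩ w hvw
      have hwVt : w ∈ Vt := hv2 w hvw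
      refine ⟨hwVt, ?_⟩
      intro x hwx
      by_contra hxVt
      obtain ⟨a, b, hab, hiff⟩ := CycHelp.two_nbrs hnd hlen (hall w)
      have hvab := (hiff v).mp (CycHelp.cycleAdj_symm hvw)
      have hxab := (hiff x).mp hwx
      have hvx : v ≠ x := fun h => hxVt (h ▸ hv1)
      have hwA : w ∈ A := by
        refine ⟨hwVt, ?_⟩
        have hseq : {y | y ∈ Vt ∧ CycleAdjIn C w y} = {y | y ∈ Vt ∧ (y = a ∨ y = b)} := by
          ext y; rw [Set.mem_setOf_eq, Set.mem_setOf_eq, hiff y]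
        rw [hseq, CycHelp.pair_ncard Vt hab]
        rcases hvab with rfl | rfl <;> rcases hxab with rfl | rfl
        · exact absurd rfl hvx
        · rw [if_pos hv1, if_neg hxVt]
        · rw [if_neg hxVt, if_pos hv1]
        · exact absurd rfl hvx
      rw [hAe] at hwA
      exact hwA
    have hvsS : vs ∈ S := ⟨hvsVt, hvs_closed⟩
    have := CycHelp.closure hnd hlen hall S hScl hvsS u
    exact huVt this.1
  -- cardinality bookkeeping
  have hAfin : A.Finite := Set.Finite.subset ((X t).erase vs).finite_toSet hAsub
  have hBfin : B.Finite := Set.Finite.subset ((X t).erase vs).finite_toSet hBsub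
  have hsum : A.ncard + B.ncard ≤ 3 := by
    have h1 : (A ∪ B).ncard = A.ncard + B.ncard := Set.ncard_union_eq hdisj hAfin hBfin
    have h2 : (A ∪ B).ncard ≤ (↑((X t).erase vs) : Set V).ncard :=
      Set.ncard_le_ncard (Set.union_subset hAsub hBsub) ((X t).erase vs).finite_toSet
    rw [h1, Set.ncard_coe_finset, Finset.card_erase_of_mem hvst, hsize t] at *
    omega
  have heven : Even A.ncard := CycHelp.even_deg_one hnd hlen hall Vt
  have hpos : 0 < A.ncard := (Set.ncard_pos hAfin).mpr hAne
  obtain ⟨k, hk⟩ := heven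
  constructor <;> omega
end
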